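/- arXiv:1902.10184 — 9 statements merged into one kernel-verified Lean document; each statement's English description precedes it below -/
import Mathlib

section
/- Let A ∈ ℝ^{n×n}. The discrete-time LTI system x(k+1) = A x(k) is convergent if and only if there exists η ∈ (0,1) such that the auxiliary system x(k+1) = A_η x(k), with A_η := (1/η) A − ((1−η)/η) I, is marginally stable. -/
open Matrix Filter

/-- The DT LTI system `x(k+1) = A x(k)` is convergent: every trajectory `A^k x₀` has a limit. -/
def DTConvergent {n : ℕ} (A : Matrix (Fin n) (Fin n) ℝ) : Prop :=
  ∀ x0 : Fin n → ℝ, ∃ xbar : Fin n → ℝ,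
    Tendsto (fun k : ℕ => (A ^ k) *ᵥ x0) atTop (nhds xbar)

/-- The DT system `x(k+1) = B x(k)` is marginally stable. -/
def DTMarginallyStable {n : ℕ} (B : Matrix (Fin n) (Fin n) ℝ) : Prop :=
  ∃ C : ℝ, 0 ≤ C ∧ ∀ (k : ℕ) (x : Fin n → ℝ), ‖(B ^ k) *ᵥ x‖ ≤ C * ‖x‖

/-- The CT LTI system `ẋ = A x` is convergent: every trajectory `exp(tA) x₀` has a limit. -/
noncomputable def CTConvergent {n : ℕ} (A : Matrix (Fin n) (Fin n) ℝ) : Prop :=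
  ∀ x0 : Fin n → ℝ, ∃ xbar : Fin n → ℝ,
    Tendsto (fun t : ℝ => (NormedSpace.exp (t • A)) *ᵥ x0) atTop (nhds xbar)

/-- The CT system `ẋ = B x` is marginally stable. -/
noncomputable def CTMarginallyStable {n : ℕ} (B : Matrix (Fin n) (Fin n) ℝ) : Prop :=
  ∃ C : ℝ, 0 ≤ C ∧ ∀ t : ℝ, 0 ≤ t → ∀ x : Fin n → ℝ,
    ‖(NormedSpace.exp (t • B)) *ᵥ x‖ ≤ C * ‖x‖

/-!
Put `b = (1/η) • A - ((1-η)/η) • 1`, so that `A = η • b + (1 - η) • 1`.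

If `A ^ k → P`, then `P` is idempotent with `A P = P A = P`, and `(A - P) ^ k = A ^ k - P → 0`
decays geometrically: `‖(A - P) ^ k‖ ≤ M r ^ k` with `r < 1`. For `η = (1 + r) / 2` one has
`b ^ k = P + η⁻¹ ^ k • (A - P - (1 - η) • 1) ^ k * (1 - P)`, and the binomial theorem
bounds the middle factor by `M (r + 1 - η) ^ k = M η ^ k`.

Conversely, let `‖b ^ k‖ ≤ C`. Expanding `A ^ k = ∑ j, w k j • b ^ j` with the binomial
weights `w k j = bernsteinWeight η k j = (k choose j) η ^ j (1 - η) ^ (k - j)` and summing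
by parts gives `‖A ^ k * (b - 1)‖ ≤ C (w k 0 + ∑ j, |w k j - w k (j + 1)|) = O(k ^ (-1/2))`,
by Cauchy–Schwarz against the binomial distribution. Bounded powers also force
`ker (b - 1) ⊓ range (b - 1) = ⊥`, so in finite dimension every `x` is `u + (b - 1) y` with
`b u = u`; then `A ^ k x → u`.
-/

open Topology Finset

section LimitOfPowers

variable {M : Type*} [Monoid M] [TopologicalSpace M] [ContinuousMul M] [T2Space M] {a p : M}

theorem pow_mul_eq_of_tendsto_pow (h : Tendsto (a ^ ·) atTop (𝓝 p)) (k : ℕ) : a ^ k * p = p :=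
  tendsto_nhds_unique (h.const_mul (a ^ k)) <| by
    simpa only [add_comm _ k, pow_add] using (tendsto_add_atTop_iff_nat k).2 h

theorem mul_eq_of_tendsto_pow (h : Tendsto (a ^ ·) atTop (𝓝 p)) : p * a = p :=
  tendsto_nhds_unique (h.mul_const a) <| by
    simpa only [pow_succ] using (tendsto_add_atTop_iff_nat 1).2 h

theorem mul_self_eq_of_tendsto_pow (h : Tendsto (a ^ ·) atTop (𝓝 p)) : p * p = p :=
  tendsto_nhds_unique (h.mul_const p) <| by
    simp only [pow_mul_eq_of_tendsto_pow h, tendsto_const_nhds]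

end LimitOfPowers

theorem sub_pow_succ_of_tendsto_pow {R : Type*} [Ring R] [TopologicalSpace R] [ContinuousMul R]
    [T2Space R] {a p : R} (h : Tendsto (a ^ ·) atTop (𝓝 p)) (k : ℕ) :
    (a - p) ^ (k + 1) = a ^ (k + 1) - p := by
  induction k with
  | zero => simp
  | succ k ih =>
    rw [pow_succ, ih, sub_mul, mul_sub, mul_sub, pow_mul_eq_of_tendsto_pow h,
      mul_eq_of_tendsto_pow h, mul_self_eq_of_tendsto_pow h, ← pow_succ]
    abel

theorem add_mul_one_sub_pow {R : Type*} [Ring R] {p s : R} (hp : p * p = p)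
    (hps : p * s * (1 - p) = 0) (k : ℕ) : (p + s * (1 - p)) ^ k = p + s ^ k * (1 - p) := by
  have htp : (1 - p) * p = 0 := by rw [sub_mul, one_mul, hp, sub_self]
  have htst : (1 - p) * s * (1 - p) = s * (1 - p) := by
    rw [sub_mul, one_mul, sub_mul, hps, sub_zero]
  induction k with
  | zero => simp
  | succ k ih =>
    rw [pow_succ, ih]
    simp only [add_mul, mul_add, hp, mul_assoc, ← mul_assoc (1 - p), htp, htst, ← mul_assoc p,
      hps]
    rw [mul_zero, add_zero, zero_add, ← mul_assoc, ← pow_succ]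

section Geometric

variable {R : Type*} [SeminormedRing R] {u : R}

theorem exists_norm_pow_le_mul_pow_of_norm_pow_le {m : ℕ} {r : ℝ} (hm : 0 < m) (hr : 0 < r)
    (h : ‖u ^ m‖ ≤ r ^ m) : ∃ C, ∀ k, ‖u ^ k‖ ≤ C * r ^ k := by
  refine ⟨∑ s ∈ range m, ‖u ^ s‖ / r ^ s, fun k => ?_⟩
  induction k using Nat.strong_induction_on with
  | _ k ih =>
    rcases lt_or_ge k m with hk | hk
    · calc ‖u ^ k‖ = ‖u ^ k‖ / r ^ k * r ^ k := by field_simp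
        _ ≤ _ := by
          gcongr
          exact single_le_sum (f := fun s => ‖u ^ s‖ / r ^ s) (fun _ _ => by positivity)
            (mem_range.2 hk)
    · obtain ⟨j, rfl⟩ := Nat.exists_eq_add_of_le' hk
      calc ‖u ^ (j + m)‖ ≤ ‖u ^ j‖ * ‖u ^ m‖ := by rw [pow_add]; exact norm_mul_le _ _
        _ ≤ (∑ s ∈ range m, ‖u ^ s‖ / r ^ s) * r ^ j * r ^ m := by
          gcongr
          exact ih j (by omega)
        _ = _ := by rw [pow_add, mul_assoc]

theorem exists_norm_pow_le_geometric_of_tendsto_zero (h : Tendsto (u ^ ·) atTop (𝓝 0)) :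
    ∃ r, 0 < r ∧ r < 1 ∧ ∃ C, ∀ k, ‖u ^ k‖ ≤ C * r ^ k := by
  obtain ⟨m, hm⟩ :=
    ((tendsto_norm_zero.comp h).eventually_lt_const one_pos).exists_forall_of_atTop
  have hm1 : ‖u ^ (m + 1)‖ < 1 := hm (m + 1) m.le_succ
  set ρ := ‖u ^ (m + 1)‖ ^ ((m + 1 : ℕ) : ℝ)⁻¹
  -- `ρ` itself may vanish; the `max` keeps the ratio positive.
  refine ⟨max ρ (1 / 2), by positivity, max_lt ?_ (by norm_num),
    exists_norm_pow_le_mul_pow_of_norm_pow_le m.succ_pos (by positivity) ?_⟩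
  · exact Real.rpow_lt_one (norm_nonneg _) hm1 (by positivity)
  · calc ‖u ^ (m + 1)‖ = ρ ^ (m + 1) :=
          (Real.rpow_inv_natCast_pow (norm_nonneg _) m.succ_ne_zero).symm
      _ ≤ _ := by gcongr; exact le_max_left _ _

end Geometric

theorem norm_add_smul_one_pow_le {R : Type*} [SeminormedRing R] [NormedAlgebra ℝ R] {q : R}
    {C r : ℝ} (hq : ∀ i, ‖q ^ i‖ ≤ C * r ^ i) (c : ℝ) (k : ℕ) :
    ‖(q + c • 1) ^ k‖ ≤ C * (r + |c|) ^ k := by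
  rw [((Commute.one_right q).smul_right c).add_pow, add_pow, mul_sum]
  refine (norm_sum_le _ _).trans (sum_le_sum fun i _ => ?_)
  rw [smul_pow, one_pow, mul_smul_comm, mul_one, ← Nat.cast_comm, ← nsmul_eq_mul]
  calc _ ≤ k.choose i * (|c| ^ (k - i) * ‖q ^ i‖) := by
        rw [← abs_pow, ← Real.norm_eq_abs, ← norm_smul]; exact norm_nsmul_le
    _ ≤ k.choose i * (|c| ^ (k - i) * (C * r ^ i)) := by gcongr; exact hq i
    _ = _ := by ring

theorem smul_sub_smul_one_pow_eq {R : Type*} [Ring R] [Algebra ℝ R] {a p : R} (hap : a * p = p)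
    (hpa : p * a = p) (hpp : p * p = p) {η : ℝ} (hη : η ≠ 0) (k : ℕ) :
    ((1 / η) • a - ((1 - η) / η) • (1 : R)) ^ k =
      p + (η⁻¹ • (a - p + (-(1 - η)) • 1)) ^ k * (1 - p) := by
  set s := η⁻¹ • (a - p + (-(1 - η)) • 1)
  have hbase : (1 / η) • a - ((1 - η) / η) • (1 : R) = p + s * (1 - p) := by
    simp only [s, smul_mul_assoc, add_mul, sub_mul, mul_sub, one_mul, mul_one, hap, hpp]
    match_scalars <;> field_simp
    ring
  have hps : p * s * (1 - p) = 0 := by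
    simp only [s, mul_smul_comm, smul_mul_assoc, mul_add, mul_sub, add_mul, sub_mul, mul_one,
      hpa, hpp]
    module
  rw [hbase, add_mul_one_sub_pow hpp hps]

theorem exists_norm_pow_le_of_tendsto_pow {R : Type*} [NormedRing R] [NormedAlgebra ℝ R]
    {a p : R} (h : Tendsto (a ^ ·) atTop (𝓝 p)) :
    ∃ η : ℝ, 0 < η ∧ η < 1 ∧
      ∃ C, ∀ k, ‖((1 / η) • a - ((1 - η) / η) • (1 : R)) ^ k‖ ≤ C := by
  have hq : Tendsto ((a - p) ^ ·) atTop (𝓝 0) := by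
    rw [← tendsto_add_atTop_iff_nat 1]
    simpa [sub_pow_succ_of_tendsto_pow h] using ((tendsto_add_atTop_iff_nat 1).2 h).sub_const p
  obtain ⟨r, hr0, hr1, M, hM⟩ := exists_norm_pow_le_geometric_of_tendsto_zero hq
  set η := (1 + r) / 2 with hη
  have hη0 : 0 < η := by positivity
  have hs : ∀ k, ‖(η⁻¹ • (a - p + (-(1 - η)) • 1)) ^ k‖ ≤ M := fun k => by
    have hk := norm_add_smul_one_pow_le hM (-(1 - η)) k
    rw [abs_neg, abs_of_pos (by linarith), show r + (1 - η) = η by linarith] at hk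
    rw [smul_pow, norm_smul, norm_pow, Real.norm_of_nonneg (inv_nonneg.2 hη0.le), inv_pow]
    calc _ ≤ (η ^ k)⁻¹ * (M * η ^ k) := by gcongr
      _ = M := by field_simp
  refine ⟨η, hη0, by linarith, ‖p‖ + M * ‖1 - p‖, fun k => ?_⟩
  have hap : a * p = p := by simpa using pow_mul_eq_of_tendsto_pow h 1
  rw [smul_sub_smul_one_pow_eq hap (mul_eq_of_tendsto_pow h) (mul_self_eq_of_tendsto_pow h)
    hη0.ne']
  calc _ ≤ ‖p‖ + ‖(η⁻¹ • (a - p + (-(1 - η)) • 1)) ^ k‖ * ‖1 - p‖ :=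
        (norm_add_le _ _).trans (add_le_add_right (norm_mul_le _ _) _)
    _ ≤ _ := by gcongr; exact hs k

noncomputable def bernsteinWeight (η : ℝ) (k j : ℕ) : ℝ :=
  (bernsteinPolynomial ℝ k j).eval η

namespace bernsteinWeight

variable {η : ℝ}

theorem eq_choose_mul (η : ℝ) (k j : ℕ) :
    bernsteinWeight η k j = k.choose j * η ^ j * (1 - η) ^ (k - j) := by
  simp [bernsteinWeight, bernsteinPolynomial]

theorem nonneg (h0 : 0 ≤ η) (h1 : η ≤ 1) (k j : ℕ) : 0 ≤ bernsteinWeight η k j := by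
  rw [eq_choose_mul]
  have : 0 ≤ 1 - η := by linarith
  positivity

theorem eq_zero_of_lt {k j : ℕ} (h : k < j) : bernsteinWeight η k j = 0 := by
  simp [bernsteinWeight, bernsteinPolynomial.eq_zero_of_lt ℝ h]

theorem zero_right (η : ℝ) (k : ℕ) : bernsteinWeight η k 0 = (1 - η) ^ k := by
  simp [eq_choose_mul]

theorem sum_eq_one (η : ℝ) (k : ℕ) : ∑ j ∈ range (k + 1), bernsteinWeight η k j = 1 := by
  simpa [bernsteinWeight, Polynomial.eval_finsetSum] using
    congrArg (Polynomial.eval η) (bernsteinPolynomial.sum ℝ k)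

theorem sum_natCast_mul (η : ℝ) (k : ℕ) :
    ∑ j ∈ range (k + 1), (j : ℝ) * bernsteinWeight η k j = k * η := by
  simpa [bernsteinWeight, Polynomial.eval_finsetSum] using
    congrArg (Polynomial.eval η) (bernsteinPolynomial.sum_smul ℝ k)

theorem succ_right_eq (η : ℝ) {k m : ℕ} (hm : m ≤ k) :
    (m + 1) * (1 - η) * bernsteinWeight η k (m + 1) = (k - m) * η * bernsteinWeight η k m := by
  rcases hm.lt_or_eq with hm | rfl
  · have hc : (k.choose (m + 1) : ℝ) * (m + 1) = k.choose m * (k - m) := by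
      have := congrArg (Nat.cast (R := ℝ)) (Nat.choose_succ_right_eq k m)
      push_cast [Nat.cast_sub hm.le] at this
      exact this
    have hpow : (1 - η) ^ (k - m) = (1 - η) ^ (k - (m + 1)) * (1 - η) := by
      rw [← pow_succ]; congr 1; omega
    rw [eq_choose_mul, eq_choose_mul, hpow, pow_succ]
    linear_combination η ^ m * η * (1 - η) ^ (k - (m + 1)) * (1 - η) * hc
  · simp [eq_zero_of_lt (Nat.lt_succ_self m)]

theorem add_one_mul_eq (η : ℝ) (k m : ℕ) :
    (k + 1) * η * bernsteinWeight η k m = (m + 1) * bernsteinWeight η (k + 1) (m + 1) := by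
  have hc : ((k + 1 : ℕ) : ℝ) * k.choose m = (k + 1).choose (m + 1) * (m + 1 : ℕ) := by
    exact_mod_cast Nat.add_one_mul_choose_eq k m
  push_cast at hc
  rw [eq_choose_mul, eq_choose_mul, Nat.add_sub_add_right, pow_succ]
  linear_combination η ^ m * η * (1 - η) ^ (k - m) * hc

theorem sum_div_add_one_le (h0 : 0 < η) (h1 : η ≤ 1) (k : ℕ) :
    ∑ m ∈ range (k + 1), bernsteinWeight η k m / (m + 1) ≤ 1 / ((k + 1) * η) := by
  have hterm : ∀ m ∈ range (k + 1), bernsteinWeight η k m / (m + 1) =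
      bernsteinWeight η (k + 1) (m + 1) / ((k + 1) * η) := fun m _ => by
    rw [div_eq_div_iff (by positivity) (by positivity)]
    linear_combination add_one_mul_eq η k m
  have htail : ∑ m ∈ range (k + 1), bernsteinWeight η (k + 1) (m + 1) ≤ 1 := by
    rw [← sum_eq_one η (k + 1), sum_range_succ' _ (k + 1)]
    exact le_add_of_nonneg_right (nonneg h0.le h1 _ _)
  rw [sum_congr rfl hterm, ← sum_div]
  gcongr

theorem sum_mul_sq_div_add_one_le (h0 : 0 < η) (h1 : η ≤ 1) (k : ℕ) :
    ∑ m ∈ range (k + 1), bernsteinWeight η k m * (m + 1 - (k + 1) * η) ^ 2 / (m + 1)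
      ≤ 1 - η := by
  have hterm : ∀ m ∈ range (k + 1),
      bernsteinWeight η k m * (m + 1 - (k + 1) * η) ^ 2 / (m + 1) =
        m * bernsteinWeight η k m + bernsteinWeight η k m
          - 2 * (k + 1) * η * bernsteinWeight η k m
          + ((k + 1) * η) ^ 2 * (bernsteinWeight η k m / (m + 1)) := fun m _ => by
    field_simp
    ring
  rw [sum_congr rfl hterm, sum_add_distrib, sum_sub_distrib, sum_add_distrib, ← mul_sum,
    ← mul_sum, sum_natCast_mul, sum_eq_one]
  have hk : (0 : ℝ) < (k + 1) * η := by positivity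
  have hinv : ((k + 1) * η) ^ 2 * ∑ m ∈ range (k + 1), bernsteinWeight η k m / (m + 1)
      ≤ (k + 1) * η :=
    calc _ ≤ ((k + 1) * η) ^ 2 * (1 / ((k + 1) * η)) := by
          gcongr; exact sum_div_add_one_le h0 h1 k
      _ = (k + 1) * η := by field_simp
  linarith

theorem abs_sub_succ_eq (h0 : 0 ≤ η) (h1 : η < 1) {k m : ℕ} (hm : m ≤ k) :
    |bernsteinWeight η k m - bernsteinWeight η k (m + 1)| =
      bernsteinWeight η k m * |m + 1 - (k + 1) * η| / ((m + 1) * (1 - η)) := by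
  have hd : 0 < ((m : ℝ) + 1) * (1 - η) := mul_pos (by positivity) (by linarith)
  calc _ = |bernsteinWeight η k m * (m + 1 - (k + 1) * η) / ((m + 1) * (1 - η))| := by
        congr 1
        rw [eq_div_iff hd.ne']
        linear_combination -succ_right_eq η hm
    _ = _ := by rw [abs_div, abs_mul, abs_of_nonneg (nonneg h0 h1.le k m), abs_of_pos hd]

theorem sq_sum_abs_sub_succ_le (h0 : 0 < η) (h1 : η < 1) (k : ℕ) :
    (∑ m ∈ range (k + 1), |bernsteinWeight η k m - bernsteinWeight η k (m + 1)|) ^ 2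
      ≤ (η * (1 - η))⁻¹ / (k + 1) := by
  have hη : 0 < 1 - η := by linarith
  have hw := nonneg h0.le h1.le k
  have hsq : ∀ m ∈ range (k + 1), |bernsteinWeight η k m - bernsteinWeight η k (m + 1)| ^ 2 =
      bernsteinWeight η k m * (m + 1 - (k + 1) * η) ^ 2 / (m + 1) / (1 - η) ^ 2 *
        (bernsteinWeight η k m / (m + 1)) := fun m hm => by
    rw [abs_sub_succ_eq h0.le h1 (Nat.lt_succ_iff.1 (mem_range.1 hm)), div_pow, mul_pow, sq_abs]
    field_simp
  calc _ ≤ (∑ m ∈ range (k + 1),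
          bernsteinWeight η k m * (m + 1 - (k + 1) * η) ^ 2 / (m + 1) / (1 - η) ^ 2) *
        ∑ m ∈ range (k + 1), bernsteinWeight η k m / (m + 1) :=
        sum_sq_le_sum_mul_sum_of_sq_le_mul _ (fun m _ => by have := hw m; positivity)
          (fun m _ => by have := hw m; positivity) fun m hm => (hsq m hm).le
    _ ≤ (1 - η) / (1 - η) ^ 2 * (1 / ((k + 1) * η)) := by
        rw [← sum_div]
        gcongr
        · exact sum_nonneg fun m _ => by have := hw m; positivity
        · exact sum_mul_sq_div_add_one_le h0 h1.le k
        · exact sum_div_add_one_le h0 h1.le k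
    _ = _ := by field_simp

theorem tendsto_sum_abs_sub_succ (h0 : 0 < η) (h1 : η < 1) :
    Tendsto (fun k => ∑ m ∈ range (k + 1),
      |bernsteinWeight η k m - bernsteinWeight η k (m + 1)|) atTop (𝓝 0) := by
  have hbound : Tendsto (fun k : ℕ => √((η * (1 - η))⁻¹ / (k + 1))) atTop (𝓝 0) := by
    simpa using ((tendsto_const_div_atTop_nhds_zero_nat _).comp (tendsto_add_atTop_nat 1)).sqrt
  refine squeeze_zero (fun k => sum_nonneg fun _ _ => abs_nonneg _) (fun k => ?_) hbound
  exact (le_abs_self _).trans (Real.abs_le_sqrt (sq_sum_abs_sub_succ_le h0 h1 k))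

end bernsteinWeight

theorem sum_range_smul_sub {S M : Type*} [Ring S] [AddCommGroup M] [Module S M] (f : ℕ → S)
    (g : ℕ → M) (n : ℕ) :
    ∑ j ∈ range n, f j • (g (j + 1) - g j) =
      ∑ j ∈ range n, (f j - f (j + 1)) • g (j + 1) + f n • g n - f 0 • g 0 := by
  induction n with
  | zero => simp
  | succ n ih =>
    rw [sum_range_succ, ih, sum_range_succ]
    simp only [smul_sub, sub_smul]
    abel

section ConvexCombination

variable {R : Type*} [Ring R] [Algebra ℝ R]

theorem convex_comb_pow_eq_sum (η : ℝ) (b : R) (k : ℕ) :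
    (η • b + (1 - η) • 1) ^ k =
      ∑ j ∈ range (k + 1), bernsteinWeight η k j • b ^ j := by
  rw [((Commute.one_right b).smul_right _).smul_left _ |>.add_pow]
  refine sum_congr rfl fun j _ => ?_
  rw [smul_pow, smul_pow, one_pow, bernsteinWeight.eq_choose_mul, mul_smul_comm, mul_one,
    smul_mul_assoc, ← Nat.cast_comm, ← nsmul_eq_mul, ← Nat.cast_smul_eq_nsmul ℝ, smul_smul,
    smul_smul]
  ring_nf

theorem convex_comb_pow_mul_sub_one (η : ℝ) (b : R) (k : ℕ) :
    (η • b + (1 - η) • 1) ^ k * (b - 1) =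
      ∑ m ∈ range (k + 1),
          (bernsteinWeight η k m - bernsteinWeight η k (m + 1)) • b ^ (m + 1)
        - bernsteinWeight η k 0 • b ^ 0 := by
  have hterm : ∀ j ∈ range (k + 1), bernsteinWeight η k j • b ^ j * (b - 1) =
      bernsteinWeight η k j • (b ^ (j + 1) - b ^ j) := fun j _ => by
    rw [smul_mul_assoc, mul_sub, mul_one, pow_succ]
  rw [convex_comb_pow_eq_sum, sum_mul, sum_congr rfl hterm,
    sum_range_smul_sub (bernsteinWeight η k) (b ^ ·),
    bernsteinWeight.eq_zero_of_lt k.lt_succ_self, zero_smul, add_zero]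

end ConvexCombination

theorem tendsto_convex_comb_pow_mul_sub_one {R : Type*} [SeminormedRing R] [NormedAlgebra ℝ R]
    {b : R} {C : ℝ} (hb : ∀ k, ‖b ^ k‖ ≤ C) {η : ℝ} (h0 : 0 < η) (h1 : η < 1) :
    Tendsto (fun k => (η • b + (1 - η) • 1) ^ k * (b - 1)) atTop (𝓝 0) := by
  have hw := bernsteinWeight.tendsto_sum_abs_sub_succ h0 h1
  have hw0 : Tendsto (fun k => bernsteinWeight η k 0) atTop (𝓝 0) := by
    simpa [bernsteinWeight.zero_right] using
      tendsto_pow_atTop_nhds_zero_of_lt_one (by linarith : 0 ≤ 1 - η) (by linarith)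
  refine squeeze_zero_norm (fun k => ?_) (by simpa using ((hw.add hw0).mul_const C))
  rw [convex_comb_pow_mul_sub_one, add_mul, sum_mul]
  refine (norm_sub_le _ _).trans
    (add_le_add ((norm_sum_le _ _).trans (sum_le_sum fun m _ => ?_)) ?_)
  · rw [norm_smul, Real.norm_eq_abs]
    exact mul_le_mul_of_nonneg_left (hb _) (abs_nonneg _)
  · rw [norm_smul, Real.norm_of_nonneg (bernsteinWeight.nonneg h0.le h1.le _ _)]
    exact mul_le_mul_of_nonneg_left (hb _) (bernsteinWeight.nonneg h0.le h1.le _ _)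

section PowerBoundedEndomorphism

variable {E : Type*} [NormedAddCommGroup E] [NormedSpace ℝ E] {T : Module.End ℝ E} {C : ℝ}

theorem disjoint_ker_range_sub_one (hT : ∀ k x, ‖(T ^ k) x‖ ≤ C * ‖x‖) :
    Disjoint (LinearMap.ker (T - 1)) (LinearMap.range (T - 1)) := by
  rw [Submodule.disjoint_def]
  rintro x hx ⟨y, rfl⟩
  have hfix : ∀ i, (T ^ i) ((T - 1) y) = (T - 1) y := fun i => by
    rw [Module.End.pow_apply]
    exact Function.IsFixedPt.iterate (sub_eq_zero.1 hx) i
  have hgrowth : ∀ K : ℕ, K * ‖(T - 1) y‖ ≤ (C + 1) * ‖y‖ := fun K => by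
    have hgeom : K • (T - 1) y = (T ^ K) y - y := by
      simpa only [Module.End.mul_apply, LinearMap.sum_apply, hfix, sum_const, card_range,
        LinearMap.sub_apply (T ^ K), Module.End.one_apply] using congrArg (· y) (geom_sum_mul T K)
    calc (K : ℝ) * ‖(T - 1) y‖ = ‖(T ^ K) y - y‖ := by
          rw [← hgeom, RCLike.norm_nsmul ℝ, nsmul_eq_mul]
      _ ≤ C * ‖y‖ + ‖y‖ := (norm_sub_le _ _).trans (add_le_add_left (hT K y) _)
      _ = (C + 1) * ‖y‖ := by ring
  by_contra hne
  obtain ⟨K, hK⟩ := exists_nat_gt ((C + 1) * ‖y‖ / ‖(T - 1) y‖)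
  rw [div_lt_iff₀ (norm_pos_iff.2 hne)] at hK
  linarith [hgrowth K]

theorem isCompl_ker_range_sub_one [FiniteDimensional ℝ E]
    (hT : ∀ k x, ‖(T ^ k) x‖ ≤ C * ‖x‖) :
    IsCompl (LinearMap.ker (T - 1)) (LinearMap.range (T - 1)) := by
  refine (Submodule.isCompl_iff_disjoint _ _ ?_).2 (disjoint_ker_range_sub_one hT)
  rw [add_comm]
  exact (LinearMap.finrank_range_add_finrank_ker _).ge

end PowerBoundedEndomorphism

theorem DTConvergent.exists_tendsto_pow {n : ℕ} {A : Matrix (Fin n) (Fin n) ℝ}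
    (hA : DTConvergent A) : ∃ P, Tendsto (A ^ ·) atTop (𝓝 P) := by
  choose xbar hx using hA
  refine ⟨Matrix.of fun i j => xbar (Pi.single j 1) i, ?_⟩
  refine tendsto_pi_nhds.2 fun i => tendsto_pi_nhds.2 fun j => ?_
  simpa [Function.comp_def] using ((continuous_apply i).tendsto _).comp (hx (Pi.single j 1))

section OperatorNorm

open scoped Matrix.Norms.Operator

theorem dtMarginallyStable_iff_exists_norm_pow_le {n : ℕ} (B : Matrix (Fin n) (Fin n) ℝ) :
    DTMarginallyStable B ↔ ∃ C, ∀ k, ‖B ^ k‖ ≤ C := by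
  constructor
  · rintro ⟨C, hC0, hC⟩
    exact ⟨C, fun k => by
      rw [Matrix.linfty_opNorm_eq_opNorm]; exact ContinuousLinearMap.opNorm_le_bound _ hC0 (hC k)⟩
  · rintro ⟨C, hC⟩
    refine ⟨max C 0, le_max_right _ _, fun k x => (Matrix.linfty_opNorm_mulVec _ _).trans ?_⟩
    exact mul_le_mul_of_nonneg_right ((hC k).trans (le_max_left _ _)) (norm_nonneg _)

theorem DTConvergent.exists_dtMarginallyStable {n : ℕ} {A : Matrix (Fin n) (Fin n) ℝ}
    (hA : DTConvergent A) :
    ∃ η : ℝ, 0 < η ∧ η < 1 ∧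
      DTMarginallyStable ((1 / η) • A - ((1 - η) / η) • 1) := by
  obtain ⟨P, hP⟩ := hA.exists_tendsto_pow
  obtain ⟨η, h0, h1, C, hC⟩ := exists_norm_pow_le_of_tendsto_pow hP
  exact ⟨η, h0, h1, (dtMarginallyStable_iff_exists_norm_pow_le _).2 ⟨C, hC⟩⟩

theorem DTMarginallyStable.dtConvergent_convex_comb {n : ℕ} {B : Matrix (Fin n) (Fin n) ℝ}
    (hB : DTMarginallyStable B) {η : ℝ} (h0 : 0 < η) (h1 : η < 1) :
    DTConvergent (η • B + (1 - η) • 1) := by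
  obtain ⟨C, hC⟩ := (dtMarginallyStable_iff_exists_norm_pow_le B).1 hB
  have htail := tendsto_convex_comb_pow_mul_sub_one hC h0 h1
  obtain ⟨C', -, hC'⟩ := hB
  have hT : ∀ k x, ‖(B.toLin' ^ k) x‖ ≤ C' * ‖x‖ := fun k x => by
    rw [← Matrix.toLin'_pow, Matrix.toLin'_apply]; exact hC' k x
  intro x
  obtain ⟨u, hu, _, ⟨y, rfl⟩, rfl⟩ :=
    Submodule.mem_sup.1 ((isCompl_ker_range_sub_one hT).sup_eq_top ▸ Submodule.mem_top (x := x))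
  have hAu : (η • B + (1 - η) • 1) *ᵥ u = u := by
    have hBu : B *ᵥ u = u := by simpa [sub_eq_zero] using hu
    rw [Matrix.add_mulVec, Matrix.smul_mulVec, Matrix.smul_mulVec, hBu, Matrix.one_mulVec]
    module
  have hsplit : ∀ k, ((η • B + (1 - η) • 1) ^ k) *ᵥ (u + (B.toLin' - 1) y) =
      u + ((η • B + (1 - η) • 1) ^ k * (B - 1)) *ᵥ y := fun k => by
    have hfix : Function.IsFixedPt (η • B + (1 - η) • 1).toLin' u := by
      rw [Function.IsFixedPt, Matrix.toLin'_apply, hAu]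
    rw [Matrix.mulVec_add, ← Matrix.mulVec_mulVec, ← Matrix.toLin'_apply (_ ^ k) u,
      Matrix.toLin'_pow, Module.End.pow_apply, hfix.iterate k]
    simp [Matrix.sub_mulVec]
  refine ⟨u, ?_⟩
  simp only [hsplit]
  simpa using tendsto_const_nhds.add
    (((Continuous.matrix_mulVec continuous_id continuous_const).tendsto 0).comp htail)

end OperatorNorm

/-- the DT LTI system is convergent iff for some `η ∈ (0,1)` the auxiliary
system with matrix `A_η = (1/η) A − ((1−η)/η) I` is marginally stable. -/
theorem dt_convergent_iff_aux_marginally_stable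
    (n : ℕ) (A : Matrix (Fin n) (Fin n) ℝ) :
    DTConvergent A ↔
      ∃ η : ℝ, 0 < η ∧ η < 1 ∧
        DTMarginallyStable ((1 / η) • A - ((1 - η) / η) • (1 : Matrix (Fin n) (Fin n) ℝ)) := by
  refine ⟨DTConvergent.exists_dtMarginallyStable, fun ⟨η, h0, h1, hB⟩ => ?_⟩
  have hA : A = η • ((1 / η) • A - ((1 - η) / η) • 1) + (1 - η) • 1 := by
    rw [smul_sub, smul_smul, smul_smul, mul_one_div_cancel h0.ne', one_smul,
      mul_div_cancel₀ _ h0.ne', sub_add_cancel]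
  exact hA ▸ hB.dtConvergent_convex_comb h0 h1
end

section
/- If the difference inclusion generated by matrices A_1, …, A_M ∈ ℝ^{n×n} is strongly convergent, then the matrices {A_i − I} all have exactly the same kernel, i.e., ker(A_i − I) = ⋂_{j=1}^M ker(A_j − I) for every i ∈ {1, …, M}. -/
open Matrix Filter

/-- `w` lies in the unit simplex `W ⊆ ℝ^M`. -/
def InSimplex {M : ℕ} (w : Fin M → ℝ) : Prop :=
  (∀ i, 0 ≤ w i) ∧ ∑ i, w i = 1

/-- The convex combination `A(w) = ∑ᵢ wᵢ Aᵢ`. -/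
def Amix {n M : ℕ} (A : Fin M → Matrix (Fin n) (Fin n) ℝ) (w : Fin M → ℝ) :
    Matrix (Fin n) (Fin n) ℝ :=
  ∑ i, w i • A i

/-- `x` is a solution of the difference inclusion generated by `A₁, …, A_M`. -/
def IsInclusionSolution {n M : ℕ} (A : Fin M → Matrix (Fin n) (Fin n) ℝ)
    (x : ℕ → Fin n → ℝ) : Prop :=
  ∃ w : ℕ → Fin M → ℝ, (∀ k, InSimplex (w k)) ∧
    ∀ k, x (k + 1) = (Amix A (w k)) *ᵥ (x k)

/-- Weak convergence: every solution of the difference inclusion has a limit. -/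
def WeaklyConvergent {n M : ℕ} (A : Fin M → Matrix (Fin n) (Fin n) ℝ) : Prop :=
  ∀ x : ℕ → Fin n → ℝ, IsInclusionSolution A x →
    ∃ xbar : Fin n → ℝ, Tendsto x atTop (nhds xbar)

/-- Strong convergence: every solution converges to a point of `⋂ᵢ ker(Aᵢ − I)`. -/
def StronglyConvergent {n M : ℕ} (A : Fin M → Matrix (Fin n) (Fin n) ℝ) : Prop :=
  ∀ x : ℕ → Fin n → ℝ, IsInclusionSolution A x →
    ∃ xbar : Fin n → ℝ, (∀ i, (A i - 1) *ᵥ xbar = 0) ∧ Tendsto x atTop (nhds xbar)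

/-- strong convergence implies that the matrices `Aᵢ − I` all share
exactly the same kernel. -/
theorem strong_convergence_implies_kernel_sharing
    (n M : ℕ) (A : Fin M → Matrix (Fin n) (Fin n) ℝ)
    (h : StronglyConvergent A) :
    ∀ i, LinearMap.ker (A i - 1).mulVecLin =
      ⨅ j, LinearMap.ker (A j - 1).mulVecLin := by
  intro i
  apply le_antisymm
  · -- any v fixed by A i generates the constant solution; strong convergence
    -- forces v ∈ every kernel
    intro v hv
    rw [LinearMap.mem_ker, Matrix.mulVecLin_apply] at hv
    have hfix : A i *ᵥ v = v := by
      have := hv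
      rw [Matrix.sub_mulVec, Matrix.one_mulVec, sub_eq_zero] at this
      exact this
    -- constant solution
    have hsol : IsInclusionSolution A (fun _ => v) := by
      refine ⟨fun _ j => if j = i then 1 else 0, fun k => ?_, fun k => ?_⟩
      · constructor
        · intro j; dsimp only; split <;> norm_num
        · simp
      · have : Amix A (fun j => if j = i then 1 else 0) = A i := by
          unfold Amix
          rw [Finset.sum_eq_single i]
          · simp
          · intro j _ hj; simp [hj]
          · simp
        simp [this, hfix]
    obtain ⟨xbar, hker, htend⟩ := h _ hsol
    have : xbar = v := tendsto_nhds_unique htend tendsto_const_nhds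
    subst this
    rw [Submodule.mem_iInf]
    intro j
    rw [LinearMap.mem_ker, Matrix.mulVecLin_apply]
    exact hker j
  · exact iInf_le _ i
end

section
/- Let w : [0,∞) → W be Lebesgue-measurable and let x : [0,∞) → ℝⁿ be differentiable with ẋ(t) = A(w(t)) x(t) for all t ≥ 0. If x(t) converges to some x̄ ∈ ℝⁿ as t → ∞, then the averages (1/T) ∫₀ᵀ A(w(t)) x̄ dt converge to 0 as T → ∞. -/
open Matrix Filter

/-! Along the solution, `A(w(t)) x̄ = ẋ(t) + A(w(t)) (x̄ - x(t))`. The first term integrates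
to `x(T) - x(0)`, which stays bounded. The second tends to `0`, since the weights stay in the
simplex and `x(t) → x̄`, so its Cesàro mean `(1/T) ∫₀ᵀ` tends to `0` as well. -/

open MeasureTheory Asymptotics Topology

theorem isLittleO_intervalIntegral_of_tendsto_zero {E : Type*} [NormedAddCommGroup E]
    [NormedSpace ℝ E] {h : ℝ → E} (hint : ∀ᶠ T in atTop, IntervalIntegrable h volume 0 T)
    (hlim : Tendsto h atTop (𝓝 0)) :
    (fun T => ∫ t in (0 : ℝ)..T, h t) =o[atTop] id := by
  refine isLittleO_iff.2 fun ε hε => ?_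
  obtain ⟨T₀, hT₀⟩ := eventually_atTop.1 <| (eventually_ge_atTop 0).and <| hint.and <|
    (NormedAddGroup.tendsto_nhds_zero.1 hlim (ε / 2) (half_pos hε)).mono fun _ => le_of_lt
  obtain ⟨hT₀0, hT₀int, -⟩ := hT₀ T₀ le_rfl
  have hK : ∀ᶠ T in atTop, ‖∫ t in (0 : ℝ)..T₀, h t‖ ≤ ε / 2 * T :=
    tendsto_id.const_mul_atTop (half_pos hε) |>.eventually_ge_atTop _
  filter_upwards [hK, eventually_ge_atTop T₀] with T hKT hT
  have htail : ‖∫ t in T₀..T, h t‖ ≤ ε / 2 * (T - T₀) := by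
    rw [← abs_of_nonneg (sub_nonneg.2 hT)]
    exact intervalIntegral.norm_integral_le_of_norm_le_const fun t ht =>
      (hT₀ t (Set.uIoc_of_le hT ▸ ht).1.le).2.2
  have hsplit := intervalIntegral.integral_add_adjacent_intervals hT₀int
    (hT₀int.symm.trans (hT₀ T hT).2.1)
  calc ‖∫ t in (0 : ℝ)..T, h t‖
      ≤ ‖∫ t in (0 : ℝ)..T₀, h t‖ + ‖∫ t in T₀..T, h t‖ := hsplit ▸ norm_add_le _ _
    _ ≤ ε / 2 * T + ε / 2 * (T - T₀) := add_le_add hKT htail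
    _ ≤ ε * ‖id T‖ := by
      rw [id, Real.norm_of_nonneg (hT₀0.trans hT)]
      nlinarith

theorem tendsto_inv_smul_intervalIntegral_of_tendsto_zero {E : Type*} [NormedAddCommGroup E]
    [NormedSpace ℝ E] {h : ℝ → E} (hint : ∀ᶠ T in atTop, IntervalIntegrable h volume 0 T)
    (hlim : Tendsto h atTop (𝓝 0)) :
    Tendsto (fun T => T⁻¹ • ∫ t in (0 : ℝ)..T, h t) atTop (𝓝 0) :=
  (isLittleO_intervalIntegral_of_tendsto_zero hint hlim).tendsto_inv_smul_nhds_zero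

theorem InSimplex.norm_le_one {M : ℕ} {w : Fin M → ℝ} (hw : InSimplex w) (i : Fin M) :
    ‖w i‖ ≤ 1 :=
  (Real.norm_of_nonneg (hw.1 i)).trans_le <|
    hw.2 ▸ Finset.single_le_sum (fun j _ => hw.1 j) (Finset.mem_univ i)

theorem amix_mulVec {n M : ℕ} (A : Fin M → Matrix (Fin n) (Fin n) ℝ) (w : Fin M → ℝ)
    (y : Fin n → ℝ) : Amix A w *ᵥ y = ∑ i, w i • (A i *ᵥ y) := by
  simp only [Amix, Matrix.sum_mulVec, Matrix.smul_mulVec]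

theorem intervalIntegrable_amix_mulVec {n M : ℕ} (A : Fin M → Matrix (Fin n) (Fin n) ℝ)
    {w : ℝ → Fin M → ℝ} (hmeas : Measurable w) {a b : ℝ}
    (hw : ∀ t ∈ Set.uIcc a b, InSimplex (w t)) {u : ℝ → Fin n → ℝ}
    (hu : ContinuousOn u (Set.uIcc a b)) :
    IntervalIntegrable (fun t => Amix A (w t) *ᵥ u t) volume a b := by
  simp_rw [amix_mulVec, ← Finset.sum_apply _ Finset.univ (fun i t => w t i • (A i *ᵥ u t))]
  refine IntervalIntegrable.sum _ fun i _ => ?_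
  refine IntervalIntegrable.smul_continuousOn (f := fun t => w t i) ?_ ?_
  · refine intervalIntegrable_const.mono_fun' (g := fun _ => (1 : ℝ))
      ((measurable_pi_apply i).comp hmeas).aestronglyMeasurable ?_
    exact ae_restrict_of_forall_mem measurableSet_uIoc fun t ht =>
      (hw t (Set.uIoc_subset_uIcc ht)).norm_le_one i
  · exact (continuous_const.matrix_mulVec continuous_id).comp_continuousOn hu

theorem tendsto_amix_mulVec_zero {α : Type*} {l : Filter α} {n M : ℕ}
    (A : Fin M → Matrix (Fin n) (Fin n) ℝ) {w : α → Fin M → ℝ}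
    (hw : ∀ᶠ t in l, InSimplex (w t)) {u : α → Fin n → ℝ} (hu : Tendsto u l (𝓝 0)) :
    Tendsto (fun t => Amix A (w t) *ᵥ u t) l (𝓝 0) := by
  simp_rw [amix_mulVec]
  rw [← Finset.sum_const_zero (s := (Finset.univ : Finset (Fin M))) (M := Fin n → ℝ)]
  refine tendsto_finsetSum _ fun i _ => IsBoundedUnder.smul_tendsto_zero ?_ ?_
  · exact isBoundedUnder_of_eventually_le (a := 1) (hw.mono fun t ht => ht.norm_le_one i)
  · have hA : Tendsto (A i *ᵥ ·) (𝓝 0) (𝓝 0) := by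
      simpa using ((continuous_const (y := A i)).matrix_mulVec continuous_id).tendsto 0
    exact hA.comp hu

/-- if a solution `x(t)` of the differential inclusion converges to `x̄`,
then the averages `(1/T) ∫₀ᵀ A(w(t)) x̄ dt` converge to `0` as `T → ∞`. -/
theorem limit_in_average_kernel_ct
    (n M : ℕ) (A : Fin M → Matrix (Fin n) (Fin n) ℝ)
    (w : ℝ → Fin M → ℝ) (hmeas : Measurable w)
    (hw : ∀ t : ℝ, 0 ≤ t → InSimplex (w t))
    (x : ℝ → Fin n → ℝ)
    (hx : ∀ t : ℝ, 0 ≤ t → HasDerivAt x ((Amix A (w t)) *ᵥ (x t)) t)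
    (xbar : Fin n → ℝ) (hconv : Tendsto x atTop (nhds xbar)) :
    Tendsto (fun T : ℝ => (1 / T) • ∫ t in (0 : ℝ)..T, (Amix A (w t)) *ᵥ xbar)
      atTop (nhds 0) := by
  have hint : ∀ u : ℝ → Fin n → ℝ, ContinuousOn u (Set.Ici 0) → ∀ T, 0 ≤ T →
      IntervalIntegrable (fun t => Amix A (w t) *ᵥ u t) volume 0 T := fun u hu T hT =>
    intervalIntegrable_amix_mulVec A hmeas (fun t ht => hw t (Set.uIcc_of_le hT ▸ ht).1)
      (hu.mono (Set.uIcc_of_le hT ▸ Set.Icc_subset_Ici_self))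
  have hxc : ContinuousOn x (Set.Ici 0) := fun t ht => (hx t ht).continuousAt.continuousWithinAt
  have hdefect := hint (fun t => xbar - x t) (continuousOn_const.sub hxc)
  have hsplit : ∀ᶠ T in atTop, T⁻¹ • (x T - x 0) +
      T⁻¹ • ∫ t in (0 : ℝ)..T, Amix A (w t) *ᵥ (xbar - x t) =
      (1 / T) • ∫ t in (0 : ℝ)..T, Amix A (w t) *ᵥ xbar := by
    filter_upwards [eventually_ge_atTop 0] with T hT
    rw [← intervalIntegral.integral_eq_sub_of_hasDerivAt
      (fun t ht => hx t (Set.uIcc_of_le hT ▸ ht).1) (hint x hxc T hT),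
      ← smul_add, ← intervalIntegral.integral_add (hint x hxc T hT) (hdefect T hT), one_div]
    simp_rw [← Matrix.mulVec_add, add_sub_cancel]
  have hboundary : Tendsto (fun T : ℝ => T⁻¹ • (x T - x 0)) atTop (𝓝 0) := by
    simpa using tendsto_inv_atTop_zero.smul (hconv.sub_const (x 0))
  have hmean : Tendsto (fun T : ℝ => T⁻¹ • ∫ t in (0 : ℝ)..T, Amix A (w t) *ᵥ (xbar - x t))
      atTop (𝓝 0) :=
    tendsto_inv_smul_intervalIntegral_of_tendsto_zero (eventually_atTop.2 ⟨0, hdefect⟩)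
      (tendsto_amix_mulVec_zero A (eventually_atTop.2 ⟨0, hw⟩)
        (by simpa using hconv.const_sub xbar))
  simpa using (hboundary.add hmean).congr' hsplit
end

section
/- Let x : ℕ → ℝⁿ be a solution of the difference inclusion generated by A_1, …, A_M ∈ ℝ^{n×n}, i.e., x(k+1) = A(w(k)) x(k) for all k for some sequence w : ℕ → W. If x(k) converges to some x̄ ∈ ℝⁿ as k → ∞, then there exists w̄ ∈ W such that (A(w̄) − I) x̄ = 0. -/
open Matrix Filter

/- Compactness gives a cluster point `p` of the parameters; along the corresponding subnet,
`x (k + 1) = f (w k) (x k)` tends both to `f p xbar` and to `xbar`. -/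
theorem Filter.Tendsto.exists_isFixedPt_of_isCompact {P X : Type*} [TopologicalSpace P]
    [TopologicalSpace X] [T2Space X] {K : Set P} (hK : IsCompact K) {f : P → X → X}
    (hf : Continuous (Function.uncurry f)) {w : ℕ → P} (hw : ∀ k, w k ∈ K) {x : ℕ → X}
    (hx : ∀ k, x (k + 1) = f (w k) (x k)) {xbar : X} (hconv : Tendsto x atTop (nhds xbar)) :
    ∃ p ∈ K, Function.IsFixedPt (f p) xbar := by
  obtain ⟨p, hpK, hp⟩ := hK.exists_mapClusterPt (f := atTop) (tendsto_principal.2 (.of_forall hw))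
  have hpair : MapClusterPt (p, xbar) atTop fun k => (w k, x k) := by
    rw [((nhds_basis_opens p).prod_nhds (nhds_basis_opens xbar)).mapClusterPt_iff_frequently]
    rintro ⟨s, t⟩ ⟨⟨hps, hs⟩, hxt, ht⟩
    exact (hp.frequently (hs.mem_nhds hps)).and_eventually (hconv.eventually (ht.mem_nhds hxt))
  have hstep : MapClusterPt (f p xbar) atTop fun k => x (k + 1) := by
    simpa only [hx, Function.comp_def, Function.uncurry_apply_pair] using
      hpair.continuousAt_comp (f := Function.uncurry f) hf.continuousAt
  refine ⟨p, hpK, eq_of_nhds_neBot ?_⟩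
  exact (hstep.clusterPt.mono ((tendsto_add_atTop_iff_nat 1).2 hconv)).neBot

theorem continuous_amix_mulVec {n M : ℕ} (A : Fin M → Matrix (Fin n) (Fin n) ℝ) :
    Continuous (Function.uncurry fun w v => Amix A w *ᵥ v) := by
  have hAmix : Continuous (Amix A) :=
    continuous_finsetSum _ fun i _ => (continuous_apply i).smul continuous_const
  exact (hAmix.comp continuous_fst).matrix_mulVec continuous_snd

/-- if a solution `x(k)` of the difference inclusion converges to `x̄`,
then `(A(w̄) − I) x̄ = 0` for some `w̄ ∈ W`. -/
theorem limit_is_fixed_point_of_some_mix_dt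
    (n M : ℕ) (A : Fin M → Matrix (Fin n) (Fin n) ℝ)
    (w : ℕ → Fin M → ℝ) (hw : ∀ k, InSimplex (w k))
    (x : ℕ → Fin n → ℝ) (hx : ∀ k, x (k + 1) = (Amix A (w k)) *ᵥ (x k))
    (xbar : Fin n → ℝ) (hconv : Tendsto x atTop (nhds xbar)) :
    ∃ wbar : Fin M → ℝ, InSimplex wbar ∧ (Amix A wbar - 1) *ᵥ xbar = 0 := by
  obtain ⟨wbar, hwbar, hfix⟩ :=
    hconv.exists_isFixedPt_of_isCompact (isCompact_stdSimplex ℝ (Fin M))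
      (continuous_amix_mulVec A) hw hx
  exact ⟨wbar, hwbar, by rw [sub_mulVec, one_mulVec, sub_eq_zero]; exact hfix⟩
end

section
/- Let w : [0,∞) → W be Lebesgue-measurable and let x : [0,∞) → ℝⁿ be differentiable with ẋ(t) = A(w(t)) x(t) for all t ≥ 0. If x(t) converges to some x̄ ∈ ℝⁿ as t → ∞, then there exists w̄ ∈ W such that A(w̄) x̄ = 0. -/
/-!
If no `A(w) x̄` vanished, the compact convex set `{A(w) x̄ : w ∈ W}` would be strictly separated
from `0` by a linear functional `f`, say `f > u > 0` on it. By compactness of `W` the bound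
`f (A(w) y) > u` persists for all `w ∈ W` and all `y` near `x̄`, so eventually
`d/dt f (x t) > u`. Then `f (x t) → ∞`, contradicting `f (x t) → f x̄`.
-/

open Matrix Filter

open Topology

theorem tendsto_atTop_of_eventually_hasDerivAt_ge {g g' : ℝ → ℝ} {c : ℝ} (hc : 0 < c)
    (hg : ∀ᶠ t in atTop, HasDerivAt g (g' t) t ∧ c ≤ g' t) : Tendsto g atTop atTop := by
  obtain ⟨T, hT⟩ := eventually_atTop.1 hg
  have hgrow : ∀ t ≥ T, g T + c * (t - T) ≤ g t := fun t ht => by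
    have := (convex_Ici T).mul_sub_le_image_sub_of_le_deriv
      (fun s hs => (hT s hs).1.continuousAt.continuousWithinAt)
      (fun s hs => (hT s (interior_subset hs)).1.differentiableAt.differentiableWithinAt)
      (fun s hs => (hT s (interior_subset hs)).1.deriv ▸ (hT s (interior_subset hs)).2)
      T Set.self_mem_Ici t ht ht
    linarith
  refine tendsto_atTop_mono' atTop (eventually_atTop.2 ⟨T, hgrow⟩) ?_
  exact tendsto_atTop_add_const_left _ _
    ((tendsto_atTop_add_const_right _ (-T) tendsto_id).const_mul_atTop hc)

theorem exists_eq_zero_of_tendsto_of_hasDerivAt {E P : Type*} [NormedAddCommGroup E]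
    [NormedSpace ℝ E] [TopologicalSpace P] {K : Set P} {F : P → E → E} {w : ℝ → P}
    {x : ℝ → E} {xbar : E} (hK : IsCompact K) (hF : Continuous (Function.uncurry F))
    (hFK : Convex ℝ ((F · xbar) '' K)) (hw : ∀ᶠ t in atTop, w t ∈ K)
    (hx : ∀ᶠ t in atTop, HasDerivAt x (F (w t) (x t)) t) (hlim : Tendsto x atTop (𝓝 xbar)) :
    ∃ p ∈ K, F p xbar = 0 := by
  by_contra! hne
  have hFK_closed : IsClosed ((F · xbar) '' K) :=
    (hK.image (hF.comp (continuous_id.prodMk continuous_const))).isClosed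
  obtain ⟨f, u, hu, hfu⟩ := geometric_hahn_banach_point_closed hFK hFK_closed
    (fun ⟨p, hp, hp0⟩ => hne p hp hp0)
  rw [map_zero] at hu
  have hnear : ∀ᶠ y in 𝓝 xbar, ∀ p ∈ K, u < f (F p y) :=
    hK.eventually_forall_of_forall_eventually fun p hp =>
      ((f.continuous.comp (hF.comp continuous_swap)).tendsto (xbar, p)).eventually
        (lt_mem_nhds (hfu _ ⟨p, hp, rfl⟩))
  have hgrowth : ∀ᶠ t in atTop,
      HasDerivAt (f ∘ x) (f (F (w t) (x t))) t ∧ u ≤ f (F (w t) (x t)) := by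
    filter_upwards [hw, hx, hlim.eventually hnear] with t hwt hxt hnear_t
    exact ⟨f.hasFDerivAt.comp_hasDerivAt t hxt, (hnear_t _ hwt).le⟩
  exact not_tendsto_atTop_of_tendsto_nhds ((f.continuous.tendsto xbar).comp hlim)
    (tendsto_atTop_of_eventually_hasDerivAt_ge hu hgrowth)

theorem convex_Amix_mulVec_image_stdSimplex {n M : ℕ} (A : Fin M → Matrix (Fin n) (Fin n) ℝ)
    (v : Fin n → ℝ) : Convex ℝ ((Amix A · *ᵥ v) '' stdSimplex ℝ (Fin M)) := by
  have hlin : (Amix A · *ᵥ v) = Fintype.linearCombination ℝ (fun i => A i *ᵥ v) := by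
    ext w
    simp [Amix, Matrix.sum_mulVec, Fintype.linearCombination_apply, Matrix.smul_mulVec]
  rw [hlin]
  exact (convex_stdSimplex ℝ _).linear_image _

theorem limit_is_equilibrium_of_some_mix_ct_general
    (n M : ℕ) (A : Fin M → Matrix (Fin n) (Fin n) ℝ)
    (w : ℝ → Fin M → ℝ)
    (hw : ∀ t : ℝ, 0 ≤ t → InSimplex (w t))
    (x : ℝ → Fin n → ℝ)
    (hx : ∀ t : ℝ, 0 ≤ t → HasDerivAt x ((Amix A (w t)) *ᵥ (x t)) t)
    (xbar : Fin n → ℝ) (hconv : Tendsto x atTop (nhds xbar)) :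
    ∃ wbar : Fin M → ℝ, InSimplex wbar ∧ (Amix A wbar) *ᵥ xbar = 0 := by
  have hF : Continuous fun p : (Fin M → ℝ) × (Fin n → ℝ) => Amix A p.1 *ᵥ p.2 := by
    unfold Amix
    fun_prop
  exact exists_eq_zero_of_tendsto_of_hasDerivAt (isCompact_stdSimplex ℝ (Fin M)) hF
    (convex_Amix_mulVec_image_stdSimplex A xbar) (eventually_atTop.2 ⟨0, hw⟩)
    (eventually_atTop.2 ⟨0, hx⟩) hconv

/-- if a solution `x(t)` of the differential inclusion converges to `x̄`,
then `A(w̄) x̄ = 0` for some `w̄ ∈ W`. -/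
theorem limit_is_equilibrium_of_some_mix_ct
    (n M : ℕ) (A : Fin M → Matrix (Fin n) (Fin n) ℝ)
    (w : ℝ → Fin M → ℝ) (hmeas : Measurable w)
    (hw : ∀ t : ℝ, 0 ≤ t → InSimplex (w t))
    (x : ℝ → Fin n → ℝ)
    (hx : ∀ t : ℝ, 0 ≤ t → HasDerivAt x ((Amix A (w t)) *ᵥ (x t)) t)
    (xbar : Fin n → ℝ) (hconv : Tendsto x atTop (nhds xbar)) :
    ∃ wbar : Fin M → ℝ, InSimplex wbar ∧ (Amix A wbar) *ᵥ xbar = 0 :=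
  limit_is_equilibrium_of_some_mix_ct_general n M A w hw x hx xbar hconv
end

section
/- Suppose the matrices A_1, …, A_M ∈ ℝ^{n×n} have the Kernel Sharing Property, i.e., ker(A_i − I) = ⋂_{j=1}^M ker(A_j − I) for every i. If the difference inclusion generated by A_1, …, A_M is weakly convergent, then it is strongly convergent. -/
/-!
A cluster point `u` of the weights of a solution makes its limit `x̄` a fixed point of `A(u)`.
Weak convergence of the constant-weight solutions `p + k q` rules out Jordan blocks of `A(u)` at
the eigenvalue `1`, so a fixed point of `A(u)` in `K + range (A(u) - I)` already lies in the
common fixed space `K`. That sum is everything: a functional `φ` vanishing on it is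
`A(u)`-invariant, so at every point some vertex `A j` does not decrease `φ`. Following such
vertices from `v` gives a solution along which `φ ≥ φ v`; its limit is fixed by a vertex used
infinitely often, hence lies in `K` by the Kernel Sharing Property, and so `φ v ≤ 0` for all `v`.
-/

open Matrix Filter

open Topology

theorem exists_mem_apply_eq_of_tendsto {X Y : Type*} [TopologicalSpace X] [T2Space X]
    [TopologicalSpace Y] [FirstCountableTopology Y] {f : Y → X → X}
    (hf : Continuous (Function.uncurry f)) {s : Set Y} (hs : IsCompact s) {y : ℕ → Y}
    (hy : ∀ k, y k ∈ s) {x : ℕ → X} (hstep : ∀ k, x (k + 1) = f (y k) (x k)) {L : X}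
    (hx : Tendsto x atTop (𝓝 L)) : ∃ u ∈ s, f u L = L := by
  obtain ⟨u, hu, ψ, hψ, hyu⟩ := hs.tendsto_subseq hy
  refine ⟨u, hu, tendsto_nhds_unique ((hf.tendsto (u, L)).comp
    (hyu.prodMk_nhds (hx.comp hψ.tendsto_atTop))) ?_⟩
  simp_rw [Function.comp_def, Function.uncurry_apply_pair, ← hstep]
  exact hx.comp ((tendsto_add_atTop_nat 1).comp hψ.tendsto_atTop)

theorem eq_zero_of_tendsto_add_nsmul {G : Type*} [AddCommGroup G] [TopologicalSpace G]
    [IsTopologicalAddGroup G] [T2Space G] {p q L : G}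
    (h : Tendsto (fun k : ℕ => p + k • q) atTop (𝓝 L)) : q = 0 := by
  have hdiff := (h.comp (tendsto_add_atTop_nat 1)).sub h
  simp only [Function.comp_def, succ_nsmul, add_sub_add_left_eq_sub, add_sub_cancel_left,
    sub_self] at hdiff
  exact tendsto_const_nhds_iff.mp hdiff

theorem exists_orbit_le {X ι β : Type*} [Preorder β] {g : ι → X → X} {φ : X → β}
    (h : ∀ y, ∃ j, φ y ≤ φ (g j y)) (x₀ : X) :
    ∃ (z : ℕ → X) (σ : ℕ → ι), z 0 = x₀ ∧ (∀ k, z (k + 1) = g (σ k) (z k)) ∧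
      ∀ k, φ x₀ ≤ φ (z k) := by
  choose τ hτ using h
  refine ⟨fun k => (fun y => g (τ y) y)^[k] x₀, fun k => τ ((fun y => g (τ y) y)^[k] x₀),
    rfl, fun k => Function.iterate_succ_apply' _ _ _, fun k => ?_⟩
  induction k with
  | zero => exact le_rfl
  | succ k ih =>
    simp only [Function.iterate_succ_apply'] at ih ⊢
    exact ih.trans (hτ _)

theorem Submodule.mem_of_mem_sup_range_of_mem_ker {R V : Type*} [Ring R] [AddCommGroup V]
    [Module R V] {g : V →ₗ[R] V} {K : Submodule R V} (hK : K ≤ LinearMap.ker g)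
    (hdisj : Disjoint (LinearMap.ker g) (LinearMap.range g)) {x : V} (hx : x ∈ LinearMap.ker g)
    (hxK : x ∈ K ⊔ LinearMap.range g) : x ∈ K := by
  obtain ⟨κ, hκ, q, hq, rfl⟩ := Submodule.mem_sup.mp hxK
  have hq0 : q = 0 := Submodule.disjoint_def.mp hdisj q
    (by simpa using Submodule.sub_mem _ hx (hK hκ)) hq
  simpa [hq0] using hκ

theorem exists_le_of_eq_sum_inSimplex {M : ℕ} {u b : Fin M → ℝ} {a : ℝ} (hu : InSimplex u)
    (ha : a = ∑ i, u i * b i) : ∃ j, a ≤ b j := by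
  have hne : (Finset.univ : Finset (Fin M)).Nonempty := by
    by_contra h
    simpa [Finset.not_nonempty_iff_eq_empty.mp h] using hu.2
  obtain ⟨j, -, hj⟩ := Finset.exists_max_image Finset.univ b hne
  refine ⟨j, ha ▸ ?_⟩
  calc ∑ i, u i * b i ≤ ∑ i, u i * b j :=
        Finset.sum_le_sum fun i hi => mul_le_mul_of_nonneg_left (hj i hi) (hu.1 i)
    _ = b j := by rw [← Finset.sum_mul, hu.2, one_mul]

section

variable {n M : ℕ}

theorem Amix_mulVec (A : Fin M → Matrix (Fin n) (Fin n) ℝ) (w : Fin M → ℝ)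
    (y : Fin n → ℝ) :
    Amix A w *ᵥ y = ∑ i, w i • (A i *ᵥ y) := by
  simp [Amix, Matrix.sum_mulVec, Matrix.smul_mulVec]

theorem continuous_Amix_mulVec (A : Fin M → Matrix (Fin n) (Fin n) ℝ) :
    Continuous fun p : (Fin M → ℝ) × (Fin n → ℝ) => Amix A p.1 *ᵥ p.2 := by
  simp only [Amix_mulVec]
  fun_prop

variable {A : Fin M → Matrix (Fin n) (Fin n) ℝ}

theorem isCompact_setOf_inSimplex : IsCompact {w : Fin M → ℝ | InSimplex w} :=
  isCompact_stdSimplex ℝ (Fin M)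

theorem isInclusionSolution_of_vertices {z : ℕ → Fin n → ℝ} {σ : ℕ → Fin M}
    (hstep : ∀ k, z (k + 1) = A (σ k) *ᵥ z k) : IsInclusionSolution A z := by
  refine ⟨fun k => Pi.single (σ k) 1, fun k => ⟨fun i => ?_, by simp⟩, fun k => ?_⟩
  · exact (Pi.single_nonneg (α := fun _ => ℝ)).2 zero_le_one i
  · simp [hstep, Amix, Pi.single_apply]

theorem mem_ker_mulVecLin_sub_one_iff {B : Matrix (Fin n) (Fin n) ℝ} {v : Fin n → ℝ} :
    v ∈ LinearMap.ker (B - 1).mulVecLin ↔ B *ᵥ v = v := by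
  simp [sub_eq_zero]

variable {K : Submodule ℝ (Fin n → ℝ)} {u : Fin M → ℝ}

theorem le_ker_Amix_sub_one (hK : ∀ i, LinearMap.ker (A i - 1).mulVecLin = K)
    (hu : InSimplex u) : K ≤ LinearMap.ker (Amix A u - 1).mulVecLin := by
  intro v hv
  have hfix : ∀ i, A i *ᵥ v = v := fun i => mem_ker_mulVecLin_sub_one_iff.mp (hK i ▸ hv)
  rw [mem_ker_mulVecLin_sub_one_iff, Amix_mulVec]
  simp [hfix, ← Finset.sum_smul, hu.2]

theorem disjoint_ker_range_Amix_sub_one (hweak : WeaklyConvergent A) (hu : InSimplex u) :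
    Disjoint (LinearMap.ker (Amix A u - 1).mulVecLin)
      (LinearMap.range (Amix A u - 1).mulVecLin) := by
  rw [Submodule.disjoint_def]
  rintro q hq ⟨p, hp⟩
  have hTq : Amix A u *ᵥ q = q := mem_ker_mulVecLin_sub_one_iff.mp hq
  have hTp : Amix A u *ᵥ p = p + q := by
    rw [← hp]
    simp
  obtain ⟨L, hL⟩ := hweak (fun k => p + k • q) ⟨fun _ => u, fun _ => hu, fun k => by
    simp only [Matrix.mulVec_add, Matrix.mulVec_smul, hTp, hTq, succ_nsmul]
    abel⟩
  exact eq_zero_of_tendsto_add_nsmul hL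

theorem apply_nonpos_of_mem_dualAnnihilator (hweak : WeaklyConvergent A)
    (hK : ∀ i, LinearMap.ker (A i - 1).mulVecLin = K) (hu : InSimplex u)
    {φ : Module.Dual ℝ (Fin n → ℝ)}
    (hφ : φ ∈ (K ⊔ LinearMap.range (Amix A u - 1).mulVecLin).dualAnnihilator)
    (v : Fin n → ℝ) : φ v ≤ 0 := by
  rw [Submodule.mem_dualAnnihilator] at hφ
  have hinv : ∀ y, φ (Amix A u *ᵥ y) = φ y := fun y => by
    simpa [Matrix.sub_mulVec, sub_eq_zero] using hφ _ (Submodule.mem_sup_right ⟨y, rfl⟩)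
  have hgreedy : ∀ y, ∃ j, φ y ≤ φ (A j *ᵥ y) := fun y =>
    exists_le_of_eq_sum_inSimplex hu (by simp [← hinv y, Amix_mulVec])
  obtain ⟨z, σ, rfl, hstep, hle⟩ := exists_orbit_le hgreedy v
  obtain ⟨L, hL⟩ := hweak z (isInclusionSolution_of_vertices hstep)
  obtain ⟨j, -, hj⟩ := exists_mem_apply_eq_of_tendsto (f := fun j v => A j *ᵥ v)
    (continuous_prod_of_discrete_left.mpr fun j => (A j).mulVecLin.continuous_of_finiteDimensional)
    isCompact_univ (fun _ => Set.mem_univ _) hstep hL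
  have hφL : φ L = 0 :=
    hφ L (Submodule.mem_sup_left (hK j ▸ mem_ker_mulVecLin_sub_one_iff.mpr hj))
  exact hφL ▸ ge_of_tendsto' ((φ.continuous_of_finiteDimensional.tendsto L).comp hL) hle

theorem sup_range_Amix_sub_one_eq_top (hweak : WeaklyConvergent A)
    (hK : ∀ i, LinearMap.ker (A i - 1).mulVecLin = K) (hu : InSimplex u) :
    K ⊔ LinearMap.range (Amix A u - 1).mulVecLin = ⊤ := by
  rw [← Submodule.dualAnnihilator_eq_bot_iff, eq_bot_iff]
  intro φ hφ
  refine LinearMap.ext fun v =>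
    le_antisymm (apply_nonpos_of_mem_dualAnnihilator hweak hK hu hφ v)
      (by simpa using apply_nonpos_of_mem_dualAnnihilator hweak hK hu hφ (-v))

end

/-- under the Kernel Sharing Property, weak convergence implies
strong convergence. -/
theorem ksp_weak_implies_strong
    (n M : ℕ) (A : Fin M → Matrix (Fin n) (Fin n) ℝ)
    (hKSP : ∀ i, LinearMap.ker (A i - 1).mulVecLin =
      ⨅ j, LinearMap.ker (A j - 1).mulVecLin)
    (hweak : WeaklyConvergent A) :
    StronglyConvergent A := by
  intro x hx
  obtain ⟨xbar, hxbar⟩ := hweak x hx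
  obtain ⟨w, hw, hstep⟩ := hx
  obtain ⟨u, hu, hfix⟩ := exists_mem_apply_eq_of_tendsto (f := fun w v => Amix A w *ᵥ v)
    (continuous_Amix_mulVec A) isCompact_setOf_inSimplex hw hstep hxbar
  have hmem : xbar ∈ ⨅ j, LinearMap.ker (A j - 1).mulVecLin :=
    Submodule.mem_of_mem_sup_range_of_mem_ker (le_ker_Amix_sub_one hKSP hu)
      (disjoint_ker_range_Amix_sub_one hweak hu) (mem_ker_mulVecLin_sub_one_iff.mpr hfix)
      (sup_range_Amix_sub_one_eq_top hweak hKSP hu ▸ Submodule.mem_top)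
  exact ⟨xbar, fun i => LinearMap.mem_ker.mp (hKSP i ▸ hmem), hxbar⟩
end

section
/- If the difference inclusion generated by matrices A_1, …, A_M ∈ ℝ^{n×n} is strongly convergent, then it admits a weak polyhedral Lyapunov function: there exist finitely many vectors f_1, …, f_s ∈ ℝⁿ spanning ℝⁿ such that the function V(x) := max_{1 ≤ j ≤ s} |⟨f_j, x⟩| satisfies V(Aᵢ x) ≤ V(x) for every i ∈ {1, …, M} and every x ∈ ℝⁿ. -/
open Matrix Filter

/-!
Strong convergence makes every product `Φ(σ, t) = A(σ (t-1)) ⋯ A(σ 0)` along a signal `σ` with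
values in the simplex converge, hence stay bounded. A Baire category argument on the compact space
of signals makes the bound uniform: the products are bounded on some cylinder set, and since a
product depends affinely on each factor, a bound for factors near a point of the simplex
extrapolates to the whole simplex, one constrained factor at a time.

Let `Q` be a projection onto the common fixed space `X̄`, so that `A(w) * Q = Q`, and `P = 1 - Q`.
Every `P Φ(σ, t)` tends to `0`; by compactness and the uniform bound there is a length `T + 1`
with `‖P Φ‖ ≤ 1/2` for all products of that length. With `β ^ (T + 1) = 1/2`, the function
`H x = max_{|w| ≤ T} β^(-|w|) ‖P A_w x‖∞` satisfies `H (A i x) ≤ β H x`, while `G x = ‖Q x‖∞`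
satisfies `G (A i x) ≤ G x + C H x`. So `V = G + c H` is a weak Lyapunov function as soon as
`C + c β ≤ c`. It is polyhedral since `max_t |a t| + c max_j |b j| = max_{t,j,±} |a t ± c b j|`,
and its functionals span because the rows of `Q` and of `P` add up to those of `1`.
-/

open scoped Matrix.Norms.Operator
open Function Set Topology

section LeftProd

variable {R : Type*}

def leftProd [Monoid R] (L : ℕ → R) : ℕ → R
  | 0 => 1
  | t + 1 => L t * leftProd L t

section Monoid

variable [Monoid R] (L : ℕ → R)

@[simp]
lemma leftProd_zero : leftProd L 0 = 1 := rfl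

lemma leftProd_succ (t : ℕ) : leftProd L (t + 1) = L t * leftProd L t := rfl

lemma leftProd_congr {L L' : ℕ → R} {t : ℕ} (h : ∀ s < t, L s = L' s) :
    leftProd L t = leftProd L' t := by
  induction t with
  | zero => rfl
  | succ t ih =>
    rw [leftProd_succ, leftProd_succ, h t t.lt_succ_self,
      ih fun s hs => h s (hs.trans t.lt_succ_self)]

lemma leftProd_add (t d : ℕ) :
    leftProd L (t + d) = leftProd (fun s => L (t + s)) d * leftProd L t := by
  induction d with
  | zero => simp
  | succ d ih => rw [← add_assoc, leftProd_succ, leftProd_succ, ih, mul_assoc]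

lemma leftProd_succ' (t : ℕ) :
    leftProd L (t + 1) = leftProd (fun s => L (s + 1)) t * L 0 := by
  rw [add_comm, leftProd_add, leftProd_succ, leftProd_zero, mul_one]
  simp only [add_comm 1]

lemma leftProd_mul_eq {q : R} (hq : ∀ k, L k * q = q) (t : ℕ) : leftProd L t * q = q := by
  induction t with
  | zero => simp
  | succ t ih => rw [leftProd_succ, mul_assoc, ih, hq]

end Monoid

lemma leftProd_update_add_smul_sub {𝕜 : Type*} [CommRing 𝕜] [Ring R] [Algebra 𝕜 R]
    (L : ℕ → R) (a : ℕ) (X Y : R) (r : 𝕜) (t : ℕ) :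
    leftProd (update L a (X + r • (Y - X))) t =
      leftProd (update L a X) t + r • (leftProd (update L a Y) t - leftProd (update L a X) t) := by
  induction t with
  | zero => simp
  | succ t ih =>
    simp only [leftProd_succ]
    rcases eq_or_ne t a with rfl | hta
    · have hpre : ∀ Z, leftProd (update L t Z) t = leftProd L t := fun Z =>
        leftProd_congr fun s hs => update_of_ne hs.ne _ _
      simp only [update_self, hpre, add_mul, smul_mul_assoc, sub_mul]
    · simp only [update_of_ne hta, ih, mul_add, mul_smul_comm, mul_sub]

end LeftProd

section UniformBound

variable {V R : Type*} [NormedAddCommGroup V] [NormedSpace ℝ V] [NormedRing R] [NormedAlgebra ℝ R]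
  {S : Set V}

lemma norm_le_of_forall_dist_lt {F : Type*} [SeminormedAddCommGroup F] [NormedSpace ℝ F]
    (hS : Convex ℝ S) (hSb : Bornology.IsBounded S) {c : V} (hc : c ∈ S) {g : V → F}
    (hg : ∀ u (r : ℝ), g (c + r • (u - c)) = g c + r • (g u - g c)) {ε N : ℝ} (hε : 0 < ε)
    (hN : ∀ u ∈ S, dist u c < ε → ‖g u‖ ≤ N) {v : V} (hv : v ∈ S) :
    ‖g v‖ ≤ (3 + 4 * Metric.diam S / ε) * N := by
  set D := Metric.diam S
  have hD : 0 ≤ D := Metric.diam_nonneg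
  have hN0 : 0 ≤ N := (norm_nonneg _).trans (hN c hc (by simpa using hε))
  -- move from `c` towards `v` just far enough to stay in the `ε`-ball, then extrapolate
  set s := ε / (ε + 2 * D)
  have hs0 : 0 < s := by positivity
  have hu : c + s • (v - c) ∈ S :=
    hS.add_smul_sub_mem hc hv ⟨hs0.le, div_le_one_of_le₀ (by linarith) (by positivity)⟩
  have hdu : dist (c + s • (v - c)) c < ε := by
    calc dist (c + s • (v - c)) c = s * dist v c := by
          rw [dist_eq_norm, add_sub_cancel_left, norm_smul, Real.norm_of_nonneg hs0.le,
            dist_eq_norm]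
      _ ≤ s * D := by gcongr; exact Metric.dist_le_diam_of_mem hSb hv hc
      _ < ε := by
          rw [div_mul_eq_mul_div, div_lt_iff₀ (by positivity)]
          nlinarith
  have hgv : g v = g c + s⁻¹ • (g (c + s • (v - c)) - g c) := by
    rw [← hg, add_sub_cancel_left, smul_smul, inv_mul_cancel₀ hs0.ne', one_smul, add_sub_cancel]
  calc ‖g v‖ ≤ N + s⁻¹ * (N + N) := by
        rw [hgv]
        refine (norm_add_le _ _).trans (add_le_add (hN c hc (by simpa using hε)) ?_)
        rw [norm_smul, Real.norm_of_nonneg (inv_nonneg.mpr hs0.le)]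
        gcongr
        exact (norm_sub_le _ _).trans (add_le_add (hN _ hu hdu) (hN c hc (by simpa using hε)))
    _ = (3 + 4 * D / ε) * N := by
        simp only [s, inv_div]
        field_simp
        ring

lemma exists_finset_forall_dist_lt_mem {ι X : Type*} [PseudoMetricSpace X] {U : Set (ι → X)}
    (hU : IsOpen U) {σ₀ : ι → X} (hσ₀ : σ₀ ∈ U) :
    ∃ (I : Finset ι) (ε : ι → ℝ), (∀ a ∈ I, 0 < ε a) ∧
      ∀ σ, (∀ a ∈ I, dist (σ a) (σ₀ a) < ε a) → σ ∈ U := by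
  obtain ⟨I, u, hu, hIu⟩ := isOpen_pi_iff.mp hU σ₀ hσ₀
  choose! ε hε hball using fun a ha => Metric.isOpen_iff.mp (hu a ha).1 (σ₀ a) (hu a ha).2
  exact ⟨I, ε, hε, fun σ hσ => hIu fun a ha => hball a ha (hσ a ha)⟩

lemma continuous_leftProd_comp (Φ : V →L[ℝ] R) (t : ℕ) :
    Continuous fun σ : ℕ → S => leftProd (fun k => Φ (σ k)) t := by
  induction t with
  | zero => exact continuous_const
  | succ t ih =>
    exact (Φ.continuous.comp (continuous_subtype_val.comp (continuous_apply t))).mul ih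

lemma norm_leftProd_le_of_forall_near (hS : Convex ℝ S) (hSb : Bornology.IsBounded S)
    (Φ : V →L[ℝ] R) (σ₀ : ℕ → S) (ε : ℕ → ℝ) (I : Finset ℕ) (hε : ∀ a ∈ I, 0 < ε a) (N : ℝ)
    (hN : ∀ σ : ℕ → S, (∀ a ∈ I, dist (σ a) (σ₀ a) < ε a) →
      ∀ t, ‖leftProd (fun k => Φ (σ k)) t‖ ≤ N) (σ : ℕ → S) (t : ℕ) :
    ‖leftProd (fun k => Φ (σ k)) t‖ ≤ (∏ a ∈ I, (3 + 4 * Metric.diam S / ε a)) * N := by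
  induction I using Finset.induction_on generalizing N with
  | empty => simpa using hN σ (by simp) t
  | insert a I ha ih =>
    rw [Finset.prod_insert ha, mul_comm (3 + _), mul_assoc]
    refine ih (fun b hb => hε b (Finset.mem_insert_of_mem hb)) _ (fun σ hσ t => ?_)
    have hupdate : ∀ u (hu : u ∈ S),
        (fun k => Φ (update σ a ⟨u, hu⟩ k)) = update (fun k => Φ (σ k)) a (Φ u) :=
      fun u hu => funext (apply_update (fun _ (x : S) => Φ x) σ a ⟨u, hu⟩)
    have key := norm_le_of_forall_dist_lt hS hSb (σ₀ a).2
      (g := fun u => leftProd (update (fun k => Φ (σ k)) a (Φ u)) t)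
      (fun u r => by
        simp only [map_add, map_smul, map_sub]
        exact leftProd_update_add_smul_sub _ a _ _ r t)
      (hε a (Finset.mem_insert_self a I))
      (fun u hu hdu => by
        rw [← hupdate u hu]
        refine hN _ (fun b hb => ?_) t
        rcases Finset.mem_insert.mp hb with rfl | hbI
        · simpa [Subtype.dist_eq] using hdu
        · rw [update_of_ne (ne_of_mem_of_not_mem hbI ha)]
          exact hσ b hbI)
      (σ a).2
    simpa only [← hupdate, update_eq_self] using key

theorem exists_forall_norm_leftProd_le (hS : Convex ℝ S) (hSc : IsCompact S) (Φ : V →L[ℝ] R)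
    (hbdd : ∀ σ : ℕ → S, ∃ C, ∀ t, ‖leftProd (fun k => Φ (σ k)) t‖ ≤ C) :
    ∃ K, ∀ (σ : ℕ → S) t, ‖leftProd (fun k => Φ (σ k)) t‖ ≤ K := by
  rcases isEmpty_or_nonempty (ℕ → S) with hσ | hσ
  · exact ⟨0, fun σ => isEmptyElim σ⟩
  have : CompactSpace S := isCompact_iff_compactSpace.mp hSc
  let B : ℕ → Set (ℕ → S) := fun N => {σ | ∀ t, ‖leftProd (fun k => Φ (σ k)) t‖ ≤ N}
  have hB : ∀ N, IsClosed (B N) := fun N => by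
    simp only [B, ofPred_forall]
    exact isClosed_iInter fun t => isClosed_le (continuous_leftProd_comp Φ t).norm continuous_const
  have hcover : ⋃ N, B N = univ := eq_univ_of_forall fun σ => by
    obtain ⟨C, hC⟩ := hbdd σ
    exact mem_iUnion.mpr ⟨⌈C⌉₊, fun t => (hC t).trans (Nat.le_ceil C)⟩
  obtain ⟨N, σ₀, hσ₀⟩ := nonempty_interior_of_iUnion_of_closed hB hcover
  obtain ⟨I, ε, hε, hnear⟩ := exists_finset_forall_dist_lt_mem isOpen_interior hσ₀
  exact ⟨_, norm_leftProd_le_of_forall_near hS hSc.isBounded Φ σ₀ ε I hε N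
    fun σ hσ => interior_subset (hnear σ hσ)⟩

end UniformBound

section Transition

variable {n M : ℕ} (A : Fin M → Matrix (Fin n) (Fin n) ℝ)

lemma amix_single (i : Fin M) : Amix A (Pi.single i 1) = A i := by
  simp [Amix, Pi.single_apply]

lemma amix_mul_eq {Q : Matrix (Fin n) (Fin n) ℝ} (hAQ : ∀ i, A i * Q = Q) {w : Fin M → ℝ}
    (hw : w ∈ stdSimplex ℝ (Fin M)) : Amix A w * Q = Q := by
  simp only [Amix, Finset.sum_mul, smul_mul_assoc, hAQ, ← Finset.sum_smul, hw.2, one_smul]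

noncomputable def amixCLM : (Fin M → ℝ) →L[ℝ] Matrix (Fin n) (Fin n) ℝ :=
  ∑ i, (ContinuousLinearMap.proj i).smulRight (A i)

lemma amixCLM_apply (w : Fin M → ℝ) : amixCLM A w = Amix A w := by
  simp [amixCLM, Amix]

noncomputable def transition (σ : ℕ → stdSimplex ℝ (Fin M)) : ℕ → Matrix (Fin n) (Fin n) ℝ :=
  leftProd fun k => amixCLM A (σ k)

lemma transition_succ (σ : ℕ → stdSimplex ℝ (Fin M)) (t : ℕ) :
    transition A σ (t + 1) = Amix A (σ t) * transition A σ t := by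
  rw [transition, leftProd_succ, amixCLM_apply]

lemma transition_mul_eq {Q : Matrix (Fin n) (Fin n) ℝ} (hAQ : ∀ i, A i * Q = Q)
    (σ : ℕ → stdSimplex ℝ (Fin M)) (t : ℕ) : transition A σ t * Q = Q :=
  leftProd_mul_eq _ (fun k => by rw [amixCLM_apply]; exact amix_mul_eq A hAQ (σ k).2) t

lemma isInclusionSolution_transition_mulVec (σ : ℕ → stdSimplex ℝ (Fin M)) (x : Fin n → ℝ) :
    IsInclusionSolution A fun k => transition A σ k *ᵥ x :=
  ⟨fun k => σ k, fun k => (σ k).2, fun k => by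
    simp only [transition_succ, mulVec_mulVec]⟩

variable {A}

lemma StronglyConvergent.exists_tendsto_transition (h : StronglyConvergent A)
    (σ : ℕ → stdSimplex ℝ (Fin M)) :
    ∃ L, (∀ i, A i * L = L) ∧ Tendsto (transition A σ) atTop (𝓝 L) := by
  choose xbar hfix hlim using fun j : Fin n =>
    h _ (isInclusionSolution_transition_mulVec A σ (Pi.single j 1))
  refine ⟨Matrix.of fun r j => xbar j r, fun i => ?_, ?_⟩
  · ext r j
    have hj := hfix j i
    rw [sub_mulVec, one_mulVec, sub_eq_zero] at hj
    simpa [Matrix.mul_apply, mulVec, dotProduct] using congrFun hj r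
  · refine tendsto_pi_nhds.2 fun r => tendsto_pi_nhds.2 fun j => ?_
    simpa [mulVec_single_one] using tendsto_pi_nhds.1 (hlim j) r

lemma StronglyConvergent.exists_forall_norm_transition_le (h : StronglyConvergent A) :
    ∃ K, ∀ σ t, ‖transition A σ t‖ ≤ K :=
  exists_forall_norm_leftProd_le (convex_stdSimplex ℝ _) (isCompact_stdSimplex _ _) (amixCLM A)
    fun σ => by
      obtain ⟨L, -, hL⟩ := h.exists_tendsto_transition σ
      obtain ⟨C, hC⟩ := isBounded_iff_forall_norm_le.mp (Metric.isBounded_range_of_tendsto _ hL)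
      exact ⟨C, fun t => hC _ ⟨t, rfl⟩⟩

end Transition

lemma exists_projection_fixedPoints {ι m : Type*} [Fintype m] [DecidableEq m]
    (A : ι → Matrix m m ℝ) :
    ∃ Q : Matrix m m ℝ, (∀ i, A i * Q = Q) ∧
      ∀ B : Matrix m m ℝ, (∀ i, A i * B = B) → Q * B = B := by
  let X : Submodule ℝ (m → ℝ) := ⨅ i, LinearMap.ker (toLin' (A i) - LinearMap.id)
  have hX : ∀ x, x ∈ X ↔ ∀ i, A i *ᵥ x = x := by
    simp [X, Submodule.mem_iInf, sub_eq_zero]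
  obtain ⟨Y, hXY⟩ := X.exists_isCompl
  let Q := LinearMap.toMatrix' (X.subtype ∘ₗ X.projectionOnto Y hXY)
  have hQ : ∀ x, Q *ᵥ x = X.projectionOnto Y hXY x := fun x => by
    simp [Q, LinearMap.toMatrix'_mulVec]
  refine ⟨Q, fun i => ext_of_mulVec_single fun j => ?_,
    fun B hB => ext_of_mulVec_single fun j => ?_⟩
  · rw [← mulVec_mulVec, hQ, (hX _).mp (X.projectionOnto Y hXY _).2]
  · have hBj : B *ᵥ Pi.single j 1 ∈ X := (hX _).mpr fun i => by rw [mulVec_mulVec, hB]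
    rw [← mulVec_mulVec, hQ, Submodule.projectionOnto_apply_left hXY ⟨_, hBj⟩]

lemma one_sub_mul_eq_mul_one_sub {R : Type*} [Ring R] {q X : R} (hq : q * q = q) (hX : X * q = q) :
    (1 - q) * X = (1 - q) * X * (1 - q) := by
  have h0 : (1 - q) * X * q = 0 := by rw [mul_assoc, hX, sub_mul, one_mul, hq, sub_self]
  rw [mul_sub, mul_one, h0, sub_zero]

section Contraction

variable {n M : ℕ} {A : Fin M → Matrix (Fin n) (Fin n) ℝ} {Q : Matrix (Fin n) (Fin n) ℝ}

lemma StronglyConvergent.tendsto_norm_one_sub_mul_transition (h : StronglyConvergent A)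
    (hQ : ∀ B, (∀ i, A i * B = B) → Q * B = B) (σ : ℕ → stdSimplex ℝ (Fin M)) :
    Tendsto (fun t => ‖(1 - Q) * transition A σ t‖) atTop (𝓝 0) := by
  obtain ⟨L, hL, hlim⟩ := h.exists_tendsto_transition σ
  have hPL : (1 - Q) * L = 0 := by rw [sub_mul, one_mul, hQ L hL, sub_self]
  simpa [hPL] using ((tendsto_const_nhds (x := 1 - Q)).mul hlim).norm

theorem StronglyConvergent.exists_transition_contraction (h : StronglyConvergent A)
    (hAQ : ∀ i, A i * Q = Q) (hQ : ∀ B, (∀ i, A i * B = B) → Q * B = B) :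
    ∃ T, ∀ σ, ‖(1 - Q) * transition A σ (T + 1)‖ ≤ 1 / 2 := by
  obtain ⟨K, hK⟩ := h.exists_forall_norm_transition_le
  set P := 1 - Q
  have hPX : ∀ σ t, P * transition A σ t = P * transition A σ t * P := fun σ t =>
    one_sub_mul_eq_mul_one_sub (hQ Q hAQ) (transition_mul_eq A hAQ σ t)
  set δ := (2 * (‖P‖ * |K| + 1))⁻¹
  have hδ : 0 < δ := by positivity
  have hsmall : ∀ σ, ∃ t, ‖P * transition A σ t‖ < δ := fun σ =>
    ((h.tendsto_norm_one_sub_mul_transition hQ σ).eventually_lt_const hδ).exists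
  obtain ⟨F, hF⟩ := isCompact_univ.elim_finite_subcover
    (fun t => {σ | ‖P * transition A σ t‖ < δ})
    (fun t => isOpen_lt (continuous_const.mul (continuous_leftProd_comp (amixCLM A) t)).norm
      continuous_const)
    (fun σ _ => mem_iUnion.mpr (hsmall σ))
  refine ⟨F.sup id, fun σ => ?_⟩
  obtain ⟨t, htF, ht⟩ := mem_iUnion₂.mp (hF (mem_univ σ))
  obtain ⟨d, hd⟩ : ∃ d, F.sup id + 1 = t + d :=
    ⟨F.sup id + 1 - t, by have := Finset.le_sup (f := id) htF; simp only [id] at this; omega⟩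
  rw [hd, transition, leftProd_add, ← transition, ← transition]
  calc ‖P * (transition A (fun s => σ (t + s)) d * transition A σ t)‖
      = ‖P * transition A (fun s => σ (t + s)) d * (P * transition A σ t)‖ := by
        rw [← mul_assoc (P * _) P, ← hPX, mul_assoc]
    _ ≤ ‖P‖ * |K| * δ := by
        refine (norm_mul_le _ _).trans (mul_le_mul ?_ ht.le (norm_nonneg _) (by positivity))
        exact (norm_mul_le _ _).trans (by gcongr; exact (hK _ _).trans (le_abs_self K))
    _ ≤ 1 / 2 := by
        have : (‖P‖ * |K| + 1) * δ = 1 / 2 := by simp only [δ]; field_simp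
        nlinarith

end Contraction

section Words

variable {m : Type*} [Fintype m] [DecidableEq m] {M : ℕ} (A : Fin M → Matrix m m ℝ)

noncomputable def wordProd {ℓ : ℕ} (w : Fin ℓ → Fin M) : Matrix m m ℝ :=
  (List.ofFn fun k => A (w k)).prod

@[simp]
lemma wordProd_zero (w : Fin 0 → Fin M) : wordProd A w = 1 := by
  simp [wordProd]

lemma wordProd_snoc {ℓ : ℕ} (w : Fin ℓ → Fin M) (i : Fin M) :
    wordProd A (Fin.snoc w i) = wordProd A w * A i := by
  rw [wordProd, wordProd, List.ofFn_succ', List.prod_concat]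
  simp

lemma wordProd_mul_eq {Q : Matrix m m ℝ} (hAQ : ∀ i, A i * Q = Q) :
    ∀ {ℓ : ℕ} (w : Fin ℓ → Fin M), wordProd A w * Q = Q
  | 0, w => by simp
  | ℓ + 1, w => by
    rw [← Fin.snoc_init_self w, wordProd_snoc, mul_assoc, hAQ, wordProd_mul_eq hAQ]

end Words

lemma exists_transition_eq_wordProd {n M : ℕ} [Nonempty (Fin M)]
    (A : Fin M → Matrix (Fin n) (Fin n) ℝ) :
    ∀ {ℓ : ℕ} (w : Fin ℓ → Fin M), ∃ σ, transition A σ ℓ = wordProd A w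
  | 0, w => ⟨fun _ => ⟨_, single_mem_stdSimplex ℝ (Classical.arbitrary (Fin M))⟩, by
      simp [transition]⟩
  | ℓ + 1, w => by
    obtain ⟨σ, hσ⟩ := exists_transition_eq_wordProd A (Fin.init w)
    refine ⟨fun | 0 => ⟨_, single_mem_stdSimplex ℝ (w (Fin.last ℓ))⟩ | k + 1 => σ k, ?_⟩
    conv_rhs => rw [← Fin.snoc_init_self w]
    rw [wordProd_snoc, ← hσ, transition, leftProd_succ']
    exact congrArg₂ (· * ·) rfl ((amixCLM_apply A _).trans (amix_single A _))

theorem StronglyConvergent.exists_wordProd_contraction {n M : ℕ}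
    {A : Fin M → Matrix (Fin n) (Fin n) ℝ} {Q : Matrix (Fin n) (Fin n) ℝ}
    (h : StronglyConvergent A) (hAQ : ∀ i, A i * Q = Q)
    (hQ : ∀ B, (∀ i, A i * B = B) → Q * B = B) :
    ∃ T, ∀ w : Fin (T + 1) → Fin M, ‖(1 - Q) * wordProd A w‖ ≤ 1 / 2 := by
  obtain ⟨T, hT⟩ := h.exists_transition_contraction hAQ hQ
  refine ⟨T, fun w => ?_⟩
  have : Nonempty (Fin M) := ⟨w 0⟩
  obtain ⟨σ, hσ⟩ := exists_transition_eq_wordProd A w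
  exact hσ ▸ hT σ

section Polyhedral

variable {m ι κ : Type*}

def polyFamily (g : ι → m → ℝ) (h : κ → m → ℝ) (c : ℝ) : ι × κ × Bool → m → ℝ :=
  fun p => g p.1 + (if p.2.2 then c else -c) • h p.2.1

lemma add_mem_span_polyFamily (g : ι → m → ℝ) (h : κ → m → ℝ) {c : ℝ} (hc : c ≠ 0) (t : ι)
    (j : κ) : g t + h j ∈ Submodule.span ℝ (range (polyFamily g h c)) := by
  have hmem : ∀ b, polyFamily g h c (t, j, b) ∈ Submodule.span ℝ (range (polyFamily g h c)) :=
    fun b => Submodule.subset_span ⟨_, rfl⟩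
  have hsum : g t + h j = ((1 + c⁻¹) / 2) • polyFamily g h c (t, j, true) +
      ((1 - c⁻¹) / 2) • polyFamily g h c (t, j, false) := by
    simp only [polyFamily, if_true, Bool.false_eq_true, if_false]
    ext s
    simp only [Pi.add_apply, Pi.smul_apply, smul_eq_mul]
    field_simp
    ring
  rw [hsum]
  exact add_mem (Submodule.smul_mem _ _ (hmem _)) (Submodule.smul_mem _ _ (hmem _))

variable [Fintype m]

/-- The `V` of the statement; it is `0` for an empty family. -/
noncomputable def polyMax (f : ι → m → ℝ) (x : m → ℝ) : ℝ :=
  ⨆ j, |f j ⬝ᵥ x|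

lemma abs_dotProduct_le_polyMax [Finite ι] (f : ι → m → ℝ) (j : ι) (x : m → ℝ) :
    |f j ⬝ᵥ x| ≤ polyMax f x :=
  le_ciSup (f := fun j => |f j ⬝ᵥ x|) (Finite.bddAbove_range _) j

lemma polyMax_nonneg (f : ι → m → ℝ) (x : m → ℝ) : 0 ≤ polyMax f x :=
  Real.iSup_nonneg fun _ => abs_nonneg _

lemma polyMax_le {f : ι → m → ℝ} {x : m → ℝ} {a : ℝ} (hf : ∀ j, |f j ⬝ᵥ x| ≤ a) (ha : 0 ≤ a) :
    polyMax f x ≤ a :=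
  Real.iSup_le hf ha

lemma polyMax_comp_equiv {ι' : Type*} (f : ι → m → ℝ) (e : ι' ≃ ι) (x : m → ℝ) :
    polyMax (f ∘ e) x = polyMax f x :=
  e.iSup_comp (g := fun j => |f j ⬝ᵥ x|)

lemma polyFamily_dotProduct (g : ι → m → ℝ) (h : κ → m → ℝ) (c : ℝ) (p : ι × κ × Bool)
    (x : m → ℝ) :
    polyFamily g h c p ⬝ᵥ x = g p.1 ⬝ᵥ x + (if p.2.2 then c else -c) * (h p.2.1 ⬝ᵥ x) := by
  rw [polyFamily, add_dotProduct, smul_dotProduct, smul_eq_mul]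

lemma abs_add_mul_abs_le_max (a c d : ℝ) : |a| + c * |d| ≤ max |a + c * d| |a + -c * d| := by
  rcases abs_cases a with ⟨ha, -⟩ | ⟨ha, -⟩ <;> rcases abs_cases d with ⟨hd, -⟩ | ⟨hd, -⟩ <;>
    rw [ha, hd, le_max_iff]
  · exact .inl ((le_abs_self _).trans' (by nlinarith))
  · exact .inr ((le_abs_self _).trans' (by nlinarith))
  · exact .inr ((neg_le_abs _).trans' (by nlinarith))
  · exact .inl ((neg_le_abs _).trans' (by nlinarith))

lemma polyMax_polyFamily [Fintype ι] [Fintype κ] [Nonempty ι] [Nonempty κ] (g : ι → m → ℝ)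
    (h : κ → m → ℝ) {c : ℝ} (hc : 0 ≤ c) (x : m → ℝ) :
    polyMax (polyFamily g h c) x = polyMax g x + c * polyMax h x := by
  refine le_antisymm (ciSup_le fun p => ?_) ?_
  · rw [polyFamily_dotProduct]
    refine (abs_add_le _ _).trans (add_le_add (abs_dotProduct_le_polyMax g _ x) ?_)
    rw [abs_mul, apply_ite abs, abs_neg, abs_of_nonneg hc, ite_self]
    exact mul_le_mul_of_nonneg_left (abs_dotProduct_le_polyMax h _ x) hc
  · obtain ⟨t, ht⟩ := exists_eq_ciSup_of_finite (f := fun t => |g t ⬝ᵥ x|)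
    obtain ⟨j, hj⟩ := exists_eq_ciSup_of_finite (f := fun j => |h j ⬝ᵥ x|)
    calc polyMax g x + c * polyMax h x = |g t ⬝ᵥ x| + c * |h j ⬝ᵥ x| := by
          rw [polyMax, polyMax, ← ht, ← hj]
      _ ≤ max |g t ⬝ᵥ x + c * (h j ⬝ᵥ x)| |g t ⬝ᵥ x + -c * (h j ⬝ᵥ x)| :=
          abs_add_mul_abs_le_max _ _ _
      _ ≤ polyMax (polyFamily g h c) x := by
          refine max_le ?_ ?_
          · simpa only [polyFamily_dotProduct, if_true] using
              abs_dotProduct_le_polyMax (polyFamily g h c) (t, j, true) x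
          · simpa only [polyFamily_dotProduct, Bool.false_eq_true, if_false] using
              abs_dotProduct_le_polyMax (polyFamily g h c) (t, j, false) x

end Polyhedral

section Lyapunov

variable {m : Type*} [Fintype m] [DecidableEq m] {M : ℕ} {A : Fin M → Matrix m m ℝ}
  {Q : Matrix m m ℝ} {β : ℝ} {T : ℕ}

variable (A Q β T) in
noncomputable def wordRows : (Σ ℓ : Fin (T + 1), Fin ℓ → Fin M) × m → m → ℝ :=
  fun p => (β ^ (p.1.1 : ℕ))⁻¹ • ((1 - Q) * wordProd A p.1.2) p.2

lemma wordRows_dotProduct (ℓ : Fin (T + 1)) (w : Fin ℓ → Fin M) (t : m) (x : m → ℝ) :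
    wordRows A Q β T (⟨ℓ, w⟩, t) ⬝ᵥ x = (β ^ (ℓ : ℕ))⁻¹ * (((1 - Q) * wordProd A w) *ᵥ x) t := by
  rw [wordRows, smul_dotProduct, smul_eq_mul]
  rfl

lemma norm_one_sub_mulVec_le_polyMax_wordRows (x : m → ℝ) :
    ‖(1 - Q) *ᵥ x‖ ≤ polyMax (wordRows A Q β T) x :=
  (pi_norm_le_iff_of_nonneg (polyMax_nonneg _ x)).2 fun t => by
    have h0 := abs_dotProduct_le_polyMax (wordRows A Q β T) (⟨⟨0, T.succ_pos⟩, Fin.elim0⟩, t) x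
    rw [wordRows_dotProduct] at h0
    simpa using h0

lemma polyMax_mulVec_le_add_polyMax_wordRows (hAQ : ∀ i, A i * Q = Q) (hQQ : Q * Q = Q)
    (i : Fin M) (x : m → ℝ) :
    polyMax Q (A i *ᵥ x) ≤ polyMax Q x + ‖Q * A i‖ * polyMax (wordRows A Q β T) x := by
  have hdecomp : Q *ᵥ (A i *ᵥ x) = Q *ᵥ x + (Q * A i) *ᵥ ((1 - Q) *ᵥ x) := by
    rw [mulVec_mulVec, mulVec_mulVec, ← add_mulVec, mul_sub, mul_one, mul_assoc, hAQ, hQQ,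
      add_sub_cancel]
  refine polyMax_le (fun t => ?_)
    (add_nonneg (polyMax_nonneg _ _) (mul_nonneg (norm_nonneg _) (polyMax_nonneg _ _)))
  change |(Q *ᵥ (A i *ᵥ x)) t| ≤ _
  rw [hdecomp, Pi.add_apply]
  refine (abs_add_le _ _).trans (add_le_add (abs_dotProduct_le_polyMax Q t x) ?_)
  calc |((Q * A i) *ᵥ ((1 - Q) *ᵥ x)) t| ≤ ‖(Q * A i) *ᵥ ((1 - Q) *ᵥ x)‖ :=
        norm_le_pi_norm ((Q * A i) *ᵥ ((1 - Q) *ᵥ x)) t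
    _ ≤ ‖Q * A i‖ * ‖(1 - Q) *ᵥ x‖ := linfty_opNorm_mulVec _ _
    _ ≤ ‖Q * A i‖ * polyMax (wordRows A Q β T) x := by
        gcongr; exact norm_one_sub_mulVec_le_polyMax_wordRows x

lemma polyMax_wordRows_mulVec_le (hAQ : ∀ i, A i * Q = Q) (hQQ : Q * Q = Q) (hβ : 0 < β)
    (hT : ∀ w : Fin (T + 1) → Fin M, ‖(1 - Q) * wordProd A w‖ ≤ β ^ (T + 1)) (i : Fin M)
    (x : m → ℝ) :
    polyMax (wordRows A Q β T) (A i *ᵥ x) ≤ β * polyMax (wordRows A Q β T) x := by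
  refine polyMax_le (fun ⟨⟨⟨ℓ, hℓ⟩, w⟩, t⟩ => ?_)
    (mul_nonneg hβ.le (polyMax_nonneg _ x))
  have hsnoc : ((1 - Q) * wordProd A w) *ᵥ (A i *ᵥ x) =
      ((1 - Q) * wordProd A (Fin.snoc w i)) *ᵥ x := by
    rw [mulVec_mulVec, wordProd_snoc, mul_assoc]
  rw [wordRows_dotProduct, hsnoc, abs_mul, abs_inv, abs_pow, abs_of_pos hβ]
  rcases Nat.lt_or_ge ℓ T with hlt | hge
  · have hnext := abs_dotProduct_le_polyMax (wordRows A Q β T)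
      (⟨⟨ℓ + 1, by omega⟩, Fin.snoc w i⟩, t) x
    rw [wordRows_dotProduct, abs_mul, abs_inv, abs_pow, abs_of_pos hβ] at hnext
    calc (β ^ ℓ)⁻¹ * |(((1 - Q) * wordProd A (Fin.snoc w i)) *ᵥ x) t|
        = β * ((β ^ (ℓ + 1))⁻¹ * |(((1 - Q) * wordProd A (Fin.snoc w i)) *ᵥ x) t|) := by
          rw [pow_succ]; field_simp
      _ ≤ β * polyMax (wordRows A Q β T) x := by gcongr
  · obtain rfl : T = ℓ := by omega
    -- `Fin.snoc w i` has length `T + 1`, too long to index `wordRows`: `hT` takes over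
    set W := wordProd A (Fin.snoc w i)
    have hWx : ((1 - Q) * W) *ᵥ x = ((1 - Q) * W) *ᵥ ((1 - Q) *ᵥ x) := by
      rw [mulVec_mulVec, ← one_sub_mul_eq_mul_one_sub hQQ (wordProd_mul_eq A hAQ _)]
    calc (β ^ T)⁻¹ * |(((1 - Q) * W) *ᵥ x) t|
        ≤ (β ^ T)⁻¹ * (‖(1 - Q) * W‖ * ‖(1 - Q) *ᵥ x‖) := by
          gcongr
          rw [hWx]
          exact (norm_le_pi_norm (((1 - Q) * W) *ᵥ ((1 - Q) *ᵥ x)) t).trans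
            (linfty_opNorm_mulVec _ _)
      _ ≤ (β ^ T)⁻¹ * (β ^ (T + 1) * polyMax (wordRows A Q β T) x) := by
          gcongr
          · exact hT _
          · exact norm_one_sub_mulVec_le_polyMax_wordRows x
      _ = β * polyMax (wordRows A Q β T) x := by
          rw [pow_succ]; field_simp

lemma span_polyFamily_wordRows {c : ℝ} (hc : c ≠ 0) :
    Submodule.span ℝ (range (polyFamily Q (wordRows A Q β T) c)) = ⊤ := by
  rw [eq_top_iff, ← (Pi.basisFun ℝ m).span_eq, Submodule.span_le]
  rintro _ ⟨t, rfl⟩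
  rw [SetLike.mem_coe]
  convert add_mem_span_polyFamily Q (wordRows A Q β T) hc t (⟨⟨0, T.succ_pos⟩, Fin.elim0⟩, t)
    using 1
  ext s
  simp [wordRows, Matrix.one_apply, Pi.single_apply, eq_comm]

lemma polyMax_polyFamily_wordRows_mulVec_le (hAQ : ∀ i, A i * Q = Q) (hQQ : Q * Q = Q)
    (hβ : 0 < β) (hT : ∀ w : Fin (T + 1) → Fin M, ‖(1 - Q) * wordProd A w‖ ≤ β ^ (T + 1))
    (i : Fin M) {c : ℝ} (hc0 : 0 ≤ c) (hc : ‖Q * A i‖ + c * β ≤ c) (x : m → ℝ) :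
    polyMax (polyFamily Q (wordRows A Q β T) c) (A i *ᵥ x) ≤
      polyMax (polyFamily Q (wordRows A Q β T) c) x := by
  rcases isEmpty_or_nonempty m with hm | hm
  · rw [Subsingleton.elim (A i *ᵥ x) x]
  have : Nonempty (Σ ℓ : Fin (T + 1), Fin ℓ → Fin M) := ⟨⟨⟨0, T.succ_pos⟩, Fin.elim0⟩⟩
  rw [polyMax_polyFamily Q (wordRows A Q β T) hc0, polyMax_polyFamily Q (wordRows A Q β T) hc0]
  have hG := polyMax_mulVec_le_add_polyMax_wordRows (β := β) (T := T) hAQ hQQ i x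
  have hH := polyMax_wordRows_mulVec_le hAQ hQQ hβ hT i x
  have hH0 := polyMax_nonneg (wordRows A Q β T) x
  nlinarith [mul_le_mul_of_nonneg_right hc hH0, mul_le_mul_of_nonneg_left hH hc0]

end Lyapunov

lemma exists_pos_forall_add_mul_le {ι : Type*} [Finite ι] (a : ι → ℝ) {β : ℝ} (hβ : β < 1) :
    ∃ c > 0, ∀ i, a i + c * β ≤ c := by
  obtain ⟨C, hC⟩ := Finite.exists_le a
  have h1β : 0 < 1 - β := by linarith
  refine ⟨|C| / (1 - β) + 1, by positivity, fun i => ?_⟩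
  have : (|C| / (1 - β) + 1) * (1 - β) = |C| + (1 - β) := by field_simp
  nlinarith [hC i, le_abs_self C]

/-- strong convergence implies the existence of a weak polyhedral
Lyapunov function `V(x) = max_j |⟨f_j, x⟩|` with the `f_j` spanning `ℝⁿ`. -/
theorem strong_convergence_implies_wPLF
    (n M : ℕ) (A : Fin M → Matrix (Fin n) (Fin n) ℝ)
    (h : StronglyConvergent A) :
    ∃ (s : ℕ) (f : Fin s → Fin n → ℝ),
      Submodule.span ℝ (Set.range f) = ⊤ ∧
      ∀ (i : Fin M) (x : Fin n → ℝ),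
        (⨆ j : Fin s, |f j ⬝ᵥ ((A i) *ᵥ x)|) ≤ ⨆ j : Fin s, |f j ⬝ᵥ x| := by
  obtain ⟨Q, hAQ, hQ⟩ := exists_projection_fixedPoints A
  obtain ⟨T, hT⟩ := h.exists_wordProd_contraction hAQ hQ
  obtain ⟨β, hβ0, hβ1, hβT⟩ : ∃ β : ℝ, 0 < β ∧ β < 1 ∧ β ^ (T + 1) = 1 / 2 :=
    ⟨(1 / 2) ^ ((T + 1 : ℕ) : ℝ)⁻¹, by positivity,
      Real.rpow_lt_one (by norm_num) (by norm_num) (by positivity),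
      Real.rpow_inv_natCast_pow (by norm_num) T.succ_ne_zero⟩
  obtain ⟨c, hc0, hc⟩ := exists_pos_forall_add_mul_le (fun i => ‖Q * A i‖) hβ1
  let f := polyFamily Q (wordRows A Q β T) c
  refine ⟨_, f ∘ (Fintype.equivFin _).symm, ?_, fun i x => ?_⟩
  · rw [EquivLike.range_comp]
    exact span_polyFamily_wordRows hc0.ne'
  · change polyMax (f ∘ _) (A i *ᵥ x) ≤ polyMax (f ∘ _) x
    rw [polyMax_comp_equiv, polyMax_comp_equiv]
    exact polyMax_polyFamily_wordRows_mulVec_le hAQ (hQ Q hAQ) hβ0 (fun w => hβT ▸ hT w) i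
      hc0.le (hc i) x
end

section
/- Let A_1, …, A_M ∈ ℝ^{n×n}. If there exist a symmetric positive definite matrix P ∈ ℝ^{n×n} and η ∈ (0,1) such that for every i ∈ {1, …, M} the matrix η (AᵢᵀPAᵢ − P) + (1−η) (Aᵢ − I)ᵀ P (Aᵢ − I) is negative semidefinite, then the difference inclusion generated by A_1, …, A_M is weakly convergent. -/
open Matrix Filter

/-!
In the norm `‖v‖² = vᵀPv` the LMI reads `‖Aᵢv‖² + β‖Aᵢv - v‖² ≤ ‖v‖²` with `β = (1 - η)/η > 0`.
By Jensen's inequality for `‖·‖²`, along a solution `‖xₖ‖²` drops by at least `β cₖ`, where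
`cₖ = ∑ᵢ wᵢ(k)‖Aᵢxₖ - xₖ‖²`; so `(cₖ)` is summable and the solution is bounded, hence has a
cluster point `y`. Since there are finitely many `Aᵢ`, near `y` every defect `‖Aᵢy - y‖` is at most
`C‖Aᵢx - x‖²`, which gives `‖xₖ₊₁ - y‖ ≤ ‖xₖ - y‖ + C cₖ`: a summable error, so `xₖ → y`.
-/

open Finset Topology

section ConvexCombination

variable {E : Type*} [SeminormedAddCommGroup E] [NormedSpace ℝ E] {ι : Type*} [Fintype ι]

theorem norm_sum_smul_sq_le {w : ι → ℝ} (hw : w ∈ stdSimplex ℝ ι) (v : ι → E) :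
    ‖∑ i, w i • v i‖ ^ 2 ≤ ∑ i, w i * ‖v i‖ ^ 2 :=
  ((convexOn_norm convex_univ).pow (fun _ _ => norm_nonneg _) 2).map_sum_le
    (fun i _ => hw.1 i) hw.2 (fun _ _ => Set.mem_univ _)

variable {T : ι → E → E} {β : ℝ}

theorem norm_sum_smul_sq_add_le (hT : ∀ i v, ‖T i v‖ ^ 2 + β * ‖T i v - v‖ ^ 2 ≤ ‖v‖ ^ 2)
    {w : ι → ℝ} (hw : w ∈ stdSimplex ℝ ι) (v : E) :
    ‖∑ i, w i • T i v‖ ^ 2 + β * ∑ i, w i * ‖T i v - v‖ ^ 2 ≤ ‖v‖ ^ 2 :=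
  calc ‖∑ i, w i • T i v‖ ^ 2 + β * ∑ i, w i * ‖T i v - v‖ ^ 2
      ≤ ∑ i, w i * (‖T i v‖ ^ 2 + β * ‖T i v - v‖ ^ 2) := by
        have h := norm_sum_smul_sq_le hw fun i => T i v
        have : ∑ i, w i * (‖T i v‖ ^ 2 + β * ‖T i v - v‖ ^ 2)
            = ∑ i, w i * ‖T i v‖ ^ 2 + β * ∑ i, w i * ‖T i v - v‖ ^ 2 := by
          rw [mul_sum, ← sum_add_distrib]
          exact sum_congr rfl fun i _ => by ring
        linarith
    _ ≤ ∑ i, w i * ‖v‖ ^ 2 := sum_le_sum fun i _ => mul_le_mul_of_nonneg_left (hT i v) (hw.1 i)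
    _ = ‖v‖ ^ 2 := by rw [← sum_mul, hw.2, one_mul]

theorem norm_sum_smul_le_of_norm_sq_add_le (hβ : 0 ≤ β)
    (hT : ∀ i v, ‖T i v‖ ^ 2 + β * ‖T i v - v‖ ^ 2 ≤ ‖v‖ ^ 2)
    {w : ι → ℝ} (hw : w ∈ stdSimplex ℝ ι) (v : E) : ‖∑ i, w i • T i v‖ ≤ ‖v‖ := by
  have h := norm_sum_smul_sq_add_le hT hw v
  have : 0 ≤ β * ∑ i, w i * ‖T i v - v‖ ^ 2 :=
    mul_nonneg hβ (sum_nonneg fun i _ => mul_nonneg (hw.1 i) (sq_nonneg _))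
  exact pow_le_pow_iff_left₀ (norm_nonneg _) (norm_nonneg _) two_ne_zero |>.1 (by linarith)

end ConvexCombination

theorem summable_of_add_le_succ {a c : ℕ → ℝ} (ha : ∀ k, 0 ≤ a k) (hc : ∀ k, 0 ≤ c k)
    (h : ∀ k, a (k + 1) + c k ≤ a k) : Summable c := by
  refine summable_of_sum_range_le (c := a 0) hc fun K => ?_
  have : ∑ k ∈ range K, c k ≤ a 0 - a K := by
    induction K with
    | zero => simp
    | succ K ih => rw [sum_range_succ]; linarith [h K]
  linarith [ha K]

theorem exists_eventually_norm_le_mul_norm_sq {X F : Type*} [TopologicalSpace X]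
    [SeminormedAddCommGroup F] {g : X → F} {y : X} (hg : ContinuousAt g y) :
    ∃ C, 0 ≤ C ∧ ∀ᶠ x in 𝓝 y, ‖g y‖ ≤ C * ‖g x‖ ^ 2 := by
  rcases (norm_nonneg (g y)).eq_or_lt with h0 | hpos
  · exact ⟨0, le_rfl, Eventually.of_forall fun _ => by simp [← h0]⟩
  refine ⟨4 / ‖g y‖, by positivity, ?_⟩
  filter_upwards [hg.norm.eventually (lt_mem_nhds (half_lt_self hpos))] with x hx
  rw [div_mul_eq_mul_div, le_div_iff₀ hpos]
  nlinarith

theorem exists_eventually_forall_norm_le_mul_norm_sq {X F ι : Type*} [TopologicalSpace X]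
    [SeminormedAddCommGroup F] [Fintype ι] {g : ι → X → F} {y : X}
    (hg : ∀ i, ContinuousAt (g i) y) :
    ∃ C, 0 ≤ C ∧ ∀ᶠ x in 𝓝 y, ∀ i, ‖g i y‖ ≤ C * ‖g i x‖ ^ 2 := by
  choose C hC0 hC using fun i => exists_eventually_norm_le_mul_norm_sq (hg i)
  refine ⟨∑ i, C i, sum_nonneg fun i _ => hC0 i, eventually_all.2 fun i => ?_⟩
  filter_upwards [hC i] with x hx
  exact hx.trans (mul_le_mul_of_nonneg_right
    (single_le_sum (fun j _ => hC0 j) (mem_univ i)) (sq_nonneg _))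

theorem tendsto_of_mapClusterPt_of_dist_succ_le {X : Type*} [PseudoMetricSpace X] {x : ℕ → X}
    {y : X} {c : ℕ → ℝ} (hc0 : ∀ k, 0 ≤ c k) (hc : Summable c) (hy : MapClusterPt y atTop x)
    {ρ : ℝ} (hρ : 0 < ρ) (hstep : ∀ k, dist (x k) y < ρ → dist (x (k + 1)) y ≤ dist (x k) y + c k) :
    Tendsto x atTop (𝓝 y) := by
  refine Metric.tendsto_atTop.2 fun ε hε => ?_
  set r := min ε ρ
  have hr : 0 < r / 2 := half_pos (lt_min hε hρ)
  obtain ⟨K, hxK, htail⟩ := ((hy.frequently (Metric.ball_mem_nhds y hr)).and_eventually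
    ((tendsto_sum_nat_add c).eventually (gt_mem_nhds hr))).exists
  have hpartial (j : ℕ) : ∑ t ∈ range j, c (t + K) ≤ ∑' t, c (t + K) :=
    ((summable_nat_add_iff K).2 hc).sum_le_tsum _ fun t _ => hc0 _
  have hbound (j : ℕ) : dist (x (j + K)) y ≤ dist (x K) y + ∑ t ∈ range j, c (t + K) := by
    induction j with
    | zero => simp
    | succ j ih =>
      have hnear : dist (x (j + K)) y < ρ := by
        linarith [hpartial j, min_le_right ε ρ, Metric.mem_ball.1 hxK]
      rw [sum_range_succ, add_right_comm j 1 K]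
      linarith [hstep _ hnear]
  refine ⟨K, fun k hk => ?_⟩
  obtain ⟨j, rfl⟩ := Nat.exists_eq_add_of_le' hk
  linarith [hbound j, hpartial j, min_le_left ε ρ, Metric.mem_ball.1 hxK]

theorem sum_smul_apply_sub_eq {E F ι : Type*} [AddCommGroup E] [Module ℝ E] [FunLike F E E]
    [AddMonoidHomClass F E E] [Fintype ι] (T : ι → F) {w : ι → ℝ} (hw : ∑ i, w i = 1) (x y : E) :
    ∑ i, w i • T i x - y = ∑ i, w i • T i (x - y) + ∑ i, w i • (T i y - y) := by
  simp only [map_sub, smul_sub, sum_sub_distrib, ← sum_smul, hw, one_smul]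
  abel

theorem exists_tendsto_of_eq_sum_smul_apply {E ι : Type*} [NormedAddCommGroup E]
    [NormedSpace ℝ E] [ProperSpace E] [Fintype ι] {T : ι → E →L[ℝ] E} {β : ℝ} (hβ : 0 < β)
    (hT : ∀ i v, ‖T i v‖ ^ 2 + β * ‖T i v - v‖ ^ 2 ≤ ‖v‖ ^ 2) {w : ℕ → ι → ℝ}
    (hw : ∀ k, w k ∈ stdSimplex ℝ ι) {x : ℕ → E} (hx : ∀ k, x (k + 1) = ∑ i, w k i • T i (x k)) :
    ∃ y, Tendsto x atTop (𝓝 y) := by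
  set c : ℕ → ℝ := fun k => ∑ i, w k i * ‖T i (x k) - x k‖ ^ 2
  have hc0 (k : ℕ) : 0 ≤ c k := sum_nonneg fun i _ => mul_nonneg ((hw k).1 i) (sq_nonneg _)
  have hc : Summable c := by
    refine (summable_mul_left_iff hβ.ne').1 (summable_of_add_le_succ (a := fun k => ‖x k‖ ^ 2)
      (fun k => sq_nonneg _) (fun k => mul_nonneg hβ.le (hc0 k)) fun k => ?_)
    simpa only [hx] using norm_sum_smul_sq_add_le hT (hw k) (x k)
  have hnonexp (k : ℕ) (v : E) : ‖∑ i, w k i • T i v‖ ≤ ‖v‖ :=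
    norm_sum_smul_le_of_norm_sq_add_le hβ.le hT (hw k) v
  have hbdd : ∀ k, x k ∈ Metric.closedBall 0 ‖x 0‖ := by
    have : Antitone fun k => ‖x k‖ := antitone_nat_of_succ_le fun k => hx k ▸ hnonexp k (x k)
    exact fun k => mem_closedBall_zero_iff.2 (this k.zero_le)
  obtain ⟨y, -, hy⟩ := (isCompact_closedBall (0 : E) ‖x 0‖).exists_mapClusterPt_of_frequently
    (Eventually.of_forall (f := atTop) hbdd).frequently
  obtain ⟨C, hC0, hC⟩ := exists_eventually_forall_norm_le_mul_norm_sq (g := fun i v => T i v - v)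
    (y := y) fun i => by fun_prop
  obtain ⟨ρ, hρ, hCρ⟩ := Metric.eventually_nhds_iff.1 hC
  refine ⟨y, tendsto_of_mapClusterPt_of_dist_succ_le (c := fun k => C * c k) ?_
    (hc.mul_left C) hy hρ fun k hk => ?_⟩
  · exact fun k => mul_nonneg hC0 (hc0 k)
  · have hdefect : ‖∑ i, w k i • (T i y - y)‖ ≤ C * c k :=
      calc ‖∑ i, w k i • (T i y - y)‖ ≤ ∑ i, w k i * ‖T i y - y‖ := by
            refine (norm_sum_le _ _).trans_eq (sum_congr rfl fun i _ => ?_)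
            rw [norm_smul, Real.norm_of_nonneg ((hw k).1 i)]
        _ ≤ ∑ i, w k i * (C * ‖T i (x k) - x k‖ ^ 2) :=
            sum_le_sum fun i _ => mul_le_mul_of_nonneg_left (hCρ hk i) ((hw k).1 i)
        _ = C * c k := by rw [mul_sum]; exact sum_congr rfl fun i _ => by ring
    rw [dist_eq_norm, dist_eq_norm, hx, sum_smul_apply_sub_eq T (hw k).2]
    exact (norm_add_le _ _).trans (add_le_add (hnonexp k _) hdefect)

theorem Matrix.dotProduct_transpose_mul_mul_mulVec {m R : Type*} [Fintype m] [CommSemiring R]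
    (B P : Matrix m m R) (u v : m → R) :
    u ⬝ᵥ ((Bᵀ * P * B) *ᵥ v) = (B *ᵥ u) ⬝ᵥ (P *ᵥ (B *ᵥ v)) := by
  rw [← mulVec_mulVec, ← mulVec_mulVec, dotProduct_mulVec, vecMul_transpose]

section PosDefSpace

variable {m : Type*} [Fintype m] {P : Matrix m m ℝ}

/-- `m → ℝ` with the inner product `⟪u, v⟫ = uᵀ P v`; a type synonym, so that this norm does not
clash with the sup norm of `m → ℝ`. -/
def PosDefSpace (_hP : P.PosDef) : Type _ := m → ℝ

namespace PosDefSpace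

variable (hP : P.PosDef)

noncomputable instance : NormedAddCommGroup (PosDefSpace hP) := P.toNormedAddCommGroup hP

noncomputable instance : InnerProductSpace ℝ (PosDefSpace hP) :=
  P.toInnerProductSpace hP.posSemidef

instance : FiniteDimensional ℝ (PosDefSpace hP) := inferInstanceAs (FiniteDimensional ℝ (m → ℝ))

def equiv : (m → ℝ) ≃ₗ[ℝ] PosDefSpace hP := LinearEquiv.refl ℝ (m → ℝ)

theorem norm_equiv_sq (v : m → ℝ) : ‖equiv hP v‖ ^ 2 = v ⬝ᵥ (P *ᵥ v) := by
  rw [← real_inner_self_eq_norm_sq]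
  exact dotProduct_comm _ _

theorem continuous_equiv_symm : Continuous (equiv hP).symm :=
  LinearMap.continuous_of_finiteDimensional _

noncomputable def mulVecCLM (A : Matrix m m ℝ) : PosDefSpace hP →L[ℝ] PosDefSpace hP :=
  LinearMap.toContinuousLinearMap
    ((equiv hP).toLinearMap ∘ₗ A.mulVecLin ∘ₗ (equiv hP).symm.toLinearMap)

theorem mulVecCLM_equiv (A : Matrix m m ℝ) (v : m → ℝ) :
    mulVecCLM hP A (equiv hP v) = equiv hP (A *ᵥ v) := rfl

theorem norm_mulVecCLM_sq_add_le [DecidableEq m] {A : Matrix m m ℝ} {η : ℝ} (hη : 0 < η)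
    (hLMI : (-(η • (Aᵀ * P * A - P) + (1 - η) • ((A - 1)ᵀ * P * (A - 1)))).PosSemidef)
    (v : PosDefSpace hP) :
    ‖mulVecCLM hP A v‖ ^ 2 + (1 - η) / η * ‖mulVecCLM hP A v - v‖ ^ 2 ≤ ‖v‖ ^ 2 := by
  obtain ⟨u, rfl⟩ := (equiv hP).surjective v
  have hsub : mulVecCLM hP A (equiv hP u) - equiv hP u = equiv hP (A *ᵥ u - u) := by
    rw [mulVecCLM_equiv, ← map_sub]
  have h := hLMI.dotProduct_mulVec_nonneg u
  simp only [star_trivial, neg_mulVec, add_mulVec, smul_mulVec, sub_mulVec, one_mulVec,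
    dotProduct_neg, dotProduct_add, dotProduct_smul, dotProduct_sub, smul_eq_mul,
    dotProduct_transpose_mul_mul_mulVec] at h
  rw [hsub, mulVecCLM_equiv, norm_equiv_sq, norm_equiv_sq, norm_equiv_sq, div_mul_eq_mul_div,
    ← le_sub_iff_add_le', div_le_iff₀ hη]
  linarith

end PosDefSpace

end PosDefSpace

/-- if there exist `P ≻ 0` and `η ∈ (0,1)` such that
`η(AᵢᵀPAᵢ − P) + (1−η)(Aᵢ−I)ᵀP(Aᵢ−I) ⪯ 0` for all `i`, then the difference
inclusion is weakly convergent. -/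
theorem lmi_implies_weak_convergence
    (n M : ℕ) (A : Fin M → Matrix (Fin n) (Fin n) ℝ)
    (P : Matrix (Fin n) (Fin n) ℝ) (hP : P.PosDef)
    (η : ℝ) (hη0 : 0 < η) (hη1 : η < 1)
    (hLMI : ∀ i, (-(η • ((A i)ᵀ * P * (A i) - P) +
        (1 - η) • ((A i - 1)ᵀ * P * (A i - 1)))).PosSemidef) :
    WeaklyConvergent A := by
  rintro x ⟨w, hw, hx⟩
  have hstep (k : ℕ) : PosDefSpace.equiv hP (x (k + 1))
      = ∑ i, w k i • PosDefSpace.mulVecCLM hP (A i) (PosDefSpace.equiv hP (x k)) := by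
    simp only [hx, Amix, sum_mulVec, smul_mulVec, map_sum, map_smul,
      PosDefSpace.mulVecCLM_equiv]
  obtain ⟨y, hy⟩ := exists_tendsto_of_eq_sum_smul_apply (div_pos (sub_pos.2 hη1) hη0)
    (fun i => PosDefSpace.norm_mulVecCLM_sq_add_le hP hη0 (hLMI i)) hw hstep
  exact ⟨_, ((PosDefSpace.continuous_equiv_symm hP).tendsto y).comp hy⟩
end

section
/- Suppose the difference inclusion generated by matrices A_1, …, A_M ∈ ℝ^{n×n} admits a weak quadratic Lyapunov function, i.e., there exists a symmetric positive definite matrix P ∈ ℝ^{n×n} such that AᵢᵀPAᵢ − P is negative semidefinite for every i ∈ {1, …, M}. Then the inclusion generated by A_1, …, A_M is strongly convergent if and only if the dual inclusion generated by the transposed matrices A_1ᵀ, …, A_Mᵀ is strongly convergent (with respect to X̄ᵀ := ⋂ᵢ ker(Aᵢᵀ − I)). -/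
open Matrix Filter

/-!
Write `P = S²` with `S = P^{1/2}`. Conjugation by `S` preserves strong convergence and turns the
`Aᵢ` into contractions `Bᵢ = S Aᵢ S⁻¹` for the Euclidean operator norm, while the `Bᵢᵀ` are the
conjugates of the `Aᵢᵀ` by `S⁻¹`; so it suffices to treat contractions.

For contractions, strong convergence says that each product `Φₜ(v) = A(v (t-1)) ⋯ A(v 0)`
converges as `t → ∞`. Since every `Aᵢᵀ` fixes every common fixed vector of the `Aᵢ`, all these
limits are one and the same symmetric matrix `Q` (the orthogonal projection onto `X̄`). The error
`‖Φₜ(v) - Q‖` is nonincreasing in `t`, so by Dini's theorem on the compact space of switching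
sequences the convergence is uniform in `v`. A dual solution is `y t = Φₜ(ṽₜ)ᵀ y 0`, where the
reversed sequence `ṽₜ` depends on `t`; uniformity still gives `y t → Q y 0`, a common fixed
vector of the `Aᵢᵀ`.
-/

open scoped InnerProductSpace ComplexOrder Topology Matrix.Norms.L2Operator

namespace ContinuousLinearMap

variable {𝕜 E : Type*} [RCLike 𝕜] [NormedAddCommGroup E] [InnerProductSpace 𝕜 E] [CompleteSpace E]

theorem adjoint_apply_eq_of_norm_le_one {T : E →L[𝕜] E} (hT : ‖T‖ ≤ 1) {x : E}
    (hx : T x = x) : adjoint T x = x := by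
  have hnorm : ‖adjoint T x‖ ≤ ‖x‖ :=
    calc ‖adjoint T x‖ ≤ ‖adjoint T‖ * ‖x‖ := (adjoint T).le_opNorm x
      _ = ‖T‖ * ‖x‖ := by rw [adjoint.norm_map]
      _ ≤ ‖x‖ := mul_le_of_le_one_left (norm_nonneg x) hT
  have hinner : RCLike.re ⟪adjoint T x, x⟫_𝕜 = ‖x‖ ^ 2 := by
    rw [adjoint_inner_left, hx, inner_self_eq_norm_sq (𝕜 := 𝕜)]
  have hdist : ‖adjoint T x - x‖ ^ 2 ≤ 0 := by
    rw [norm_sub_sq (𝕜 := 𝕜), hinner]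
    nlinarith [norm_nonneg (adjoint T x), norm_nonneg x]
  rw [← sub_eq_zero, ← norm_eq_zero]
  exact pow_eq_zero_iff two_ne_zero |>.1 (le_antisymm hdist (sq_nonneg _))

theorem norm_le_one_of_isPositive_one_sub {T : E →L[𝕜] E} (hT : (1 - adjoint T * T).IsPositive) :
    ‖T‖ ≤ 1 := by
  refine opNorm_le_bound _ zero_le_one fun x => ?_
  have h := hT.re_inner_nonneg_left x
  rw [_root_.sub_apply, one_apply_eq_self, mul_apply_eq_comp, inner_sub_left, adjoint_inner_left,
    map_sub, inner_self_eq_norm_sq, inner_self_eq_norm_sq, sub_nonneg] at h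
  rw [one_mul]
  exact (pow_le_pow_iff_left₀ (norm_nonneg _) (norm_nonneg _) two_ne_zero).1 h

end ContinuousLinearMap

namespace Matrix

variable {𝕜 n : Type*} [RCLike 𝕜] [Fintype n] [DecidableEq n]

theorem toEuclideanCLM_conjTranspose (A : Matrix n n 𝕜) :
    toEuclideanCLM (n := n) (𝕜 := 𝕜) Aᴴ =
      ContinuousLinearMap.adjoint (toEuclideanCLM (n := n) (𝕜 := 𝕜) A) := by
  rw [← star_eq_conjTranspose, map_star, ContinuousLinearMap.star_eq_adjoint]

theorem conjTranspose_mul_eq_self_of_mul_eq_self {A R : Matrix n n 𝕜} (hA : ‖A‖ ≤ 1)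
    (h : A * R = R) : Aᴴ * R = R := by
  have h' := congrArg (toEuclideanCLM (n := n) (𝕜 := 𝕜)) h
  rw [map_mul] at h'
  refine EquivLike.injective (toEuclideanCLM (n := n) (𝕜 := 𝕜)) ?_
  rw [map_mul, toEuclideanCLM_conjTranspose]
  ext1 x
  exact ContinuousLinearMap.adjoint_apply_eq_of_norm_le_one hA congr($h' x)

theorem l2_opNorm_le_one_of_posSemidef {A : Matrix n n 𝕜} (hA : (1 - Aᴴ * A).PosSemidef) :
    ‖A‖ ≤ 1 := by
  change ‖toEuclideanCLM (n := n) (𝕜 := 𝕜) A‖ ≤ 1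
  refine ContinuousLinearMap.norm_le_one_of_isPositive_one_sub ?_
  have h : 1 - ContinuousLinearMap.adjoint (toEuclideanCLM (n := n) (𝕜 := 𝕜) A) *
      toEuclideanCLM (n := n) (𝕜 := 𝕜) A = toEuclideanCLM (n := n) (𝕜 := 𝕜) (1 - Aᴴ * A) := by
    rw [map_sub, map_one, map_mul, toEuclideanCLM_conjTranspose]
  rw [h, ← ContinuousLinearMap.isPositive_toLinearMap_iff]
  exact isPositive_toEuclideanLin_iff.2 hA

theorem l2_opNorm_conj_le_one {S A P : Matrix n n 𝕜} (hS : IsUnit S) (hP : Sᴴ * S = P)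
    (h : (P - Aᴴ * P * A).PosSemidef) : ‖S * A * S⁻¹‖ ≤ 1 := by
  have hS' := (isUnit_iff_isUnit_det S).1 hS
  apply l2_opNorm_le_one_of_posSemidef
  convert h.conjTranspose_mul_mul_same S⁻¹ using 1
  have h₁ : S⁻¹ᴴ * Sᴴ = 1 := by rw [← conjTranspose_mul, mul_nonsing_inv S hS', conjTranspose_one]
  simp only [← hP, conjTranspose_mul, Matrix.mul_sub, Matrix.sub_mul, mul_assoc]
  rw [mul_nonsing_inv S hS', mul_one, h₁]

open scoped MatrixOrder in
theorem PosDef.exists_isUnit_mul_self_eq {P : Matrix n n 𝕜} (hP : P.PosDef) :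
    ∃ S : Matrix n n 𝕜, IsUnit S ∧ Sᴴ = S ∧ S * S = P := by
  have hP₀ : 0 ≤ P := hP.posSemidef.nonneg
  exact ⟨CFC.sqrt P, (CFC.isUnit_sqrt_iff P).2 hP.isUnit,
    (CFC.sqrt_nonneg P).isSelfAdjoint.star_eq, CFC.sqrt_mul_sqrt_self P⟩

end Matrix

section DifferenceInclusion

variable {n M : ℕ} {A : Fin M → Matrix (Fin n) (Fin n) ℝ}

theorem isCompact_setOf_forall_inSimplex :
    IsCompact {v : ℕ → Fin M → ℝ | ∀ k, InSimplex (v k)} :=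
  isCompact_pi_infinite fun _ => isCompact_stdSimplex ℝ (Fin M)

theorem continuous_Amix (A : Fin M → Matrix (Fin n) (Fin n) ℝ) : Continuous (Amix A) :=
  continuous_finsetSum _ fun i _ => (continuous_apply i).smul continuous_const

theorem Amix_transpose (A : Fin M → Matrix (Fin n) (Fin n) ℝ) (w : Fin M → ℝ) :
    Amix (fun i => (A i)ᵀ) w = (Amix A w)ᵀ := by
  simp only [Amix, transpose_sum, transpose_smul]

theorem mul_Amix_mul (A : Fin M → Matrix (Fin n) (Fin n) ℝ) (S T : Matrix (Fin n) (Fin n) ℝ)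
    (w : Fin M → ℝ) : S * Amix A w * T = Amix (fun i => S * A i * T) w := by
  simp only [Amix, Finset.mul_sum, Finset.sum_mul, mul_smul_comm, smul_mul_assoc]

theorem Amix_mul_of_forall_mul_eq {R : Matrix (Fin n) (Fin n) ℝ} (h : ∀ i, A i * R = R)
    {w : Fin M → ℝ} (hw : InSimplex w) : Amix A w * R = R := by
  simp only [Amix, Finset.sum_mul, smul_mul_assoc, h, ← Finset.sum_smul, hw.2, one_smul]

theorem norm_Amix_le_one (hA : ∀ i, ‖A i‖ ≤ 1) {w : Fin M → ℝ} (hw : InSimplex w) :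
    ‖Amix A w‖ ≤ 1 :=
  calc ‖Amix A w‖ ≤ ∑ i, ‖w i • A i‖ := norm_sum_le _ _
    _ ≤ ∑ i, w i := Finset.sum_le_sum fun i _ => by
        rw [norm_smul, Real.norm_of_nonneg (hw.1 i)]
        exact mul_le_of_le_one_right (hw.1 i) (hA i)
    _ = 1 := hw.2

def transitionMatrix (A : Fin M → Matrix (Fin n) (Fin n) ℝ) (v : ℕ → Fin M → ℝ) :
    ℕ → Matrix (Fin n) (Fin n) ℝ
  | 0 => 1
  | t + 1 => Amix A (v t) * transitionMatrix A v t

section TransitionMatrix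

variable {v : ℕ → Fin M → ℝ}

@[simp] theorem transitionMatrix_zero : transitionMatrix A v 0 = 1 := rfl

theorem transitionMatrix_succ (t : ℕ) :
    transitionMatrix A v (t + 1) = Amix A (v t) * transitionMatrix A v t := rfl

theorem transitionMatrix_succ' (t : ℕ) :
    transitionMatrix A v (t + 1) = transitionMatrix A (fun k => v (k + 1)) t * Amix A (v 0) := by
  induction t with
  | zero => simp [transitionMatrix_succ]
  | succ t ih => rw [transitionMatrix_succ, ih, transitionMatrix_succ, mul_assoc]

theorem eq_transitionMatrix_mulVec {x : ℕ → Fin n → ℝ}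
    (hx : ∀ k, x (k + 1) = Amix A (v k) *ᵥ x k) : ∀ t, x t = transitionMatrix A v t *ᵥ x 0
  | 0 => (one_mulVec _).symm
  | t + 1 => by rw [hx, eq_transitionMatrix_mulVec hx t, transitionMatrix_succ, mulVec_mulVec]

theorem isInclusionSolution_transitionMatrix_mulVec (hv : ∀ k, InSimplex (v k))
    (x : Fin n → ℝ) : IsInclusionSolution A (fun t => transitionMatrix A v t *ᵥ x) :=
  ⟨v, hv, fun t => by simp only [transitionMatrix_succ, mulVec_mulVec]⟩

theorem transpose_transitionMatrix (t : ℕ) :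
    (transitionMatrix (fun i => (A i)ᵀ) v t)ᵀ = transitionMatrix A (fun k => v (t - 1 - k)) t := by
  induction t with
  | zero => simp
  | succ t ih =>
    rw [transitionMatrix_succ, transpose_mul, ih, Amix_transpose, transpose_transpose,
      transitionMatrix_succ']
    simp only [Nat.add_sub_cancel, Nat.sub_zero]
    congr 3
    funext k
    congr 1
    omega

theorem transitionMatrix_mul_of_forall_mul_eq {R : Matrix (Fin n) (Fin n) ℝ}
    (h : ∀ i, A i * R = R) (hv : ∀ k, InSimplex (v k)) (t : ℕ) :
    transitionMatrix A v t * R = R := by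
  induction t with
  | zero => exact one_mul R
  | succ t ih => rw [transitionMatrix_succ, mul_assoc, ih, Amix_mul_of_forall_mul_eq h (hv t)]

theorem continuous_transitionMatrix (A : Fin M → Matrix (Fin n) (Fin n) ℝ) (t : ℕ) :
    Continuous fun v => transitionMatrix A v t := by
  induction t with
  | zero => exact continuous_const
  | succ t ih => exact ((continuous_Amix A).comp (continuous_apply t)).mul ih

theorem StronglyConvergent.exists_tendsto_transitionMatrix (hS : StronglyConvergent A)
    (hv : ∀ k, InSimplex (v k)) :
    ∃ Q, (∀ i, A i * Q = Q) ∧ Tendsto (transitionMatrix A v) atTop (𝓝 Q) := by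
  choose xbar hfix hlim using fun b : Fin n =>
    hS _ (isInclusionSolution_transitionMatrix_mulVec hv (Pi.single b 1))
  refine ⟨(of xbar)ᵀ, fun i => ?_, ?_⟩
  · ext a b
    have hfixed : A i *ᵥ xbar b = xbar b := by simpa [sub_mulVec, sub_eq_zero] using hfix b i
    exact congrFun hfixed a
  · have hcols : Tendsto (fun t => (transitionMatrix A v t)ᵀ) atTop (𝓝 (of xbar)) :=
      tendsto_pi_nhds.2 fun b => (hlim b).congr fun t => by rw [mulVec_single_one]; rfl
    simpa [Function.comp_def] using (continuous_id.matrix_transpose.tendsto _).comp hcols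

theorem transpose_mul_eq_of_tendsto_transitionMatrix (hA : ∀ i, ‖A i‖ ≤ 1)
    (hv : ∀ k, InSimplex (v k)) {Q R : Matrix (Fin n) (Fin n) ℝ}
    (hQ : Tendsto (transitionMatrix A v) atTop (𝓝 Q)) (hR : ∀ i, A i * R = R) : Qᵀ * R = R := by
  have hRt : ∀ i, (A i)ᵀ * R = R := fun i => by
    simpa using conjTranspose_mul_eq_self_of_mul_eq_self (hA i) (hR i)
  have hfix : ∀ t, (transitionMatrix A v t)ᵀ * R = R := fun t => by
    have h := transpose_transitionMatrix (A := fun i => (A i)ᵀ) (v := v) t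
    simp only [transpose_transpose] at h
    rw [h]
    exact transitionMatrix_mul_of_forall_mul_eq hRt (fun k => hv _) t
  have hlim : Tendsto (fun t => (transitionMatrix A v t)ᵀ * R) atTop (𝓝 (Qᵀ * R)) :=
    ((continuous_id.matrix_transpose.mul continuous_const).tendsto Q).comp hQ
  simp only [hfix] at hlim
  exact tendsto_nhds_unique hlim tendsto_const_nhds

end TransitionMatrix

theorem tendstoUniformlyOn_transitionMatrix (hA : ∀ i, ‖A i‖ ≤ 1)
    {Q : Matrix (Fin n) (Fin n) ℝ} (hAQ : ∀ i, A i * Q = Q)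
    (hlim : ∀ v, (∀ k, InSimplex (v k)) → Tendsto (transitionMatrix A v) atTop (𝓝 Q)) :
    TendstoUniformlyOn (fun t v => transitionMatrix A v t) (fun _ => Q) atTop
      {v | ∀ k, InSimplex (v k)} := by
  have hanti : ∀ v ∈ {v : ℕ → Fin M → ℝ | ∀ k, InSimplex (v k)},
      Antitone fun t => ‖transitionMatrix A v t - Q‖ := fun v hv =>
    antitone_nat_of_succ_le fun t =>
      calc ‖transitionMatrix A v (t + 1) - Q‖
          = ‖Amix A (v t) * (transitionMatrix A v t - Q)‖ := by
            rw [mul_sub, Amix_mul_of_forall_mul_eq hAQ (hv t), transitionMatrix_succ]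
        _ ≤ ‖Amix A (v t)‖ * ‖transitionMatrix A v t - Q‖ := norm_mul_le _ _
        _ ≤ ‖transitionMatrix A v t - Q‖ :=
            mul_le_of_le_one_left (norm_nonneg _) (norm_Amix_le_one hA (hv t))
  have hdini := Antitone.tendstoUniformlyOn_of_forall_tendsto (f := fun _ => (0 : ℝ))
    isCompact_setOf_forall_inSimplex
    (fun t => ((continuous_transitionMatrix A t).sub continuous_const).norm.continuousOn) hanti
    continuousOn_const fun v hv => tendsto_iff_norm_sub_tendsto_zero.1 (hlim v hv)
  rw [Metric.tendstoUniformlyOn_iff] at hdini ⊢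
  intro ε hε
  filter_upwards [hdini ε hε] with t ht v hv
  simpa [dist_eq_norm, norm_sub_rev] using ht v hv

theorem StronglyConvergent.exists_forall_tendsto_transitionMatrix (hA : ∀ i, ‖A i‖ ≤ 1)
    (hS : StronglyConvergent A) {w₀ : Fin M → ℝ} (hw₀ : InSimplex w₀) :
    ∃ Q, Qᵀ = Q ∧ (∀ i, A i * Q = Q) ∧
      ∀ v, (∀ k, InSimplex (v k)) → Tendsto (transitionMatrix A v) atTop (𝓝 Q) := by
  obtain ⟨Q, hAQ, hQ⟩ := hS.exists_tendsto_transitionMatrix (v := fun _ => w₀) fun _ => hw₀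
  have hsymm : Qᵀ = Q := by
    have hQQ := transpose_mul_eq_of_tendsto_transitionMatrix hA (fun _ => hw₀) hQ hAQ
    rw [← hQQ, transpose_mul, transpose_transpose]
  refine ⟨Q, hsymm, hAQ, fun v hv => ?_⟩
  obtain ⟨Q', hAQ', hQ'⟩ := hS.exists_tendsto_transitionMatrix hv
  have hQ'Q : Q'ᵀ = Q :=
    calc Q'ᵀ = (Qᵀ * Q')ᵀ := by
          rw [transpose_mul_eq_of_tendsto_transitionMatrix hA (fun _ => hw₀) hQ hAQ']
      _ = Q'ᵀ * Q := by rw [transpose_mul, transpose_transpose]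
      _ = Q := transpose_mul_eq_of_tendsto_transitionMatrix hA hv hQ' hAQ
  rwa [← hsymm, ← hQ'Q, transpose_transpose]

theorem StronglyConvergent.transpose_of_norm_le_one (hA : ∀ i, ‖A i‖ ≤ 1)
    (hS : StronglyConvergent A) : StronglyConvergent fun i => (A i)ᵀ := by
  rintro y ⟨w, hw, hy⟩
  obtain ⟨Q, hsymm, hAQ, hlim⟩ := hS.exists_forall_tendsto_transitionMatrix hA (hw 0)
  have hunif := Metric.tendstoUniformlyOn_iff.1 (tendstoUniformlyOn_transitionMatrix hA hAQ hlim)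
  have hrev : Tendsto (fun t => transitionMatrix A (fun k => w (t - 1 - k)) t) atTop (𝓝 Q) :=
    Metric.tendsto_nhds.2 fun ε hε => (hunif ε hε).mono fun t ht => by
      rw [dist_comm]
      exact ht _ fun k => hw _
  refine ⟨Q *ᵥ y 0, fun i => ?_, ?_⟩
  · show ((A i)ᵀ - 1) *ᵥ (Q *ᵥ y 0) = 0
    rw [sub_mulVec, one_mulVec, mulVec_mulVec, ← conjTranspose_eq_transpose_of_trivial,
      conjTranspose_mul_eq_self_of_mul_eq_self (hA i) (hAQ i), sub_self]
  · have hy' : ∀ t, (transitionMatrix A (fun k => w (t - 1 - k)) t)ᵀ *ᵥ y 0 = y t := fun t => by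
      rw [← transpose_transitionMatrix, transpose_transpose, ← eq_transitionMatrix_mulVec hy]
    have hlimy : Tendsto (fun t => (transitionMatrix A (fun k => w (t - 1 - k)) t)ᵀ *ᵥ y 0) atTop
        (𝓝 (Qᵀ *ᵥ y 0)) :=
      ((continuous_id.matrix_transpose.matrix_mulVec continuous_const).tendsto Q).comp hrev
    rw [hsymm] at hlimy
    exact hlimy.congr hy'

theorem stronglyConvergent_transpose_iff (hA : ∀ i, ‖A i‖ ≤ 1) :
    StronglyConvergent (fun i => (A i)ᵀ) ↔ StronglyConvergent A := by
  refine ⟨fun h => ?_, fun h => h.transpose_of_norm_le_one hA⟩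
  simpa using h.transpose_of_norm_le_one fun i => by
    rw [← conjTranspose_eq_transpose_of_trivial, l2_opNorm_conjTranspose]
    exact hA i

theorem StronglyConvergent.conj (h : StronglyConvergent A) {S : Matrix (Fin n) (Fin n) ℝ}
    (hS : IsUnit S) : StronglyConvergent fun i => S * A i * S⁻¹ := by
  have hS' := (isUnit_iff_isUnit_det S).1 hS
  rintro y ⟨w, hw, hy⟩
  obtain ⟨xbar, hfix, hlim⟩ := h (fun k => S⁻¹ *ᵥ y k) ⟨w, hw, fun k => by
    simp only [hy, ← mul_Amix_mul, mulVec_mulVec, ← mul_assoc, nonsing_inv_mul S hS', one_mul]⟩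
  refine ⟨S *ᵥ xbar, fun i => ?_, ?_⟩
  · rw [mulVec_mulVec, sub_mul, mul_assoc, nonsing_inv_mul S hS', mul_one, one_mul, ← mul_sub_one,
      ← mulVec_mulVec, hfix i, mulVec_zero]
  · have hy : ∀ k, S *ᵥ (S⁻¹ *ᵥ y k) = y k := fun k => by
      rw [mulVec_mulVec, mul_nonsing_inv S hS', one_mulVec]
    exact (((continuous_const.matrix_mulVec continuous_id).tendsto _).comp hlim).congr hy

theorem stronglyConvergent_conj_iff {S : Matrix (Fin n) (Fin n) ℝ} (hS : IsUnit S) :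
    StronglyConvergent (fun i => S * A i * S⁻¹) ↔ StronglyConvergent A := by
  have hS' := (isUnit_iff_isUnit_det S).1 hS
  refine ⟨fun h => ?_, fun h => h.conj hS⟩
  have hA : (fun i => S⁻¹ * (S * A i * S⁻¹) * S⁻¹⁻¹) = A := funext fun i => by
    rw [nonsing_inv_nonsing_inv S hS', ← mul_assoc S⁻¹, nonsing_inv_mul_cancel_right (h := hS'),
      nonsing_inv_mul_cancel_left (h := hS')]
  simpa only [hA] using h.conj (isUnit_nonsing_inv_iff.2 hS)

end DifferenceInclusion

/-- if the difference inclusion admits a weak quadratic Lyapunov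
function, then it is strongly convergent iff the dual inclusion (generated by the
transposed matrices) is strongly convergent. -/
theorem wqlf_strong_convergence_duality
    (n M : ℕ) (A : Fin M → Matrix (Fin n) (Fin n) ℝ)
    (P : Matrix (Fin n) (Fin n) ℝ) (hP : P.PosDef)
    (hwQLF : ∀ i, (-((A i)ᵀ * P * (A i) - P)).PosSemidef) :
    StronglyConvergent A ↔ StronglyConvergent (fun i => (A i)ᵀ) := by
  obtain ⟨S, hS, hSsymm, hSS⟩ := hP.exists_isUnit_mul_self_eq
  rw [conjTranspose_eq_transpose_of_trivial] at hSsymm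
  have hB : ∀ i, ‖S * A i * S⁻¹‖ ≤ 1 := fun i =>
    l2_opNorm_conj_le_one hS (by rw [conjTranspose_eq_transpose_of_trivial, hSsymm, hSS])
      (by simpa [neg_sub] using hwQLF i)
  have hBt : ∀ i, (S * A i * S⁻¹)ᵀ = S⁻¹ * (A i)ᵀ * S⁻¹⁻¹ := fun i => by
    rw [transpose_mul, transpose_mul, transpose_nonsing_inv, hSsymm,
      nonsing_inv_nonsing_inv S ((isUnit_iff_isUnit_det S).1 hS), mul_assoc]
  calc StronglyConvergent A
      ↔ StronglyConvergent fun i => S * A i * S⁻¹ := (stronglyConvergent_conj_iff hS).symm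
    _ ↔ StronglyConvergent fun i => (S * A i * S⁻¹)ᵀ := (stronglyConvergent_transpose_iff hB).symm
    _ ↔ StronglyConvergent fun i => (A i)ᵀ := by
        simp_rw [hBt]
        exact stronglyConvergent_conj_iff (isUnit_nonsing_inv_iff.2 hS)
end
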